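/- arXiv:1308.0754 — 9 statements merged into one kernel-verified Lean document; each statement's English description precedes it below -/
import Mathlib

section
/- For all t, φ, ℓ ∈ ℝ, the squared Frobenius norm of the matrix product a_t · k_φ · a_ℓ in SL₂(ℝ) equals 2·(cosh ℓ · cosh t + cos φ · sinh ℓ · sinh t). -/
open Matrix MeasureTheory Real Filter Topology
open scoped MatrixGroups Pointwise

noncomputable section

/-- `SL(2,ℝ)` as the special linear group of 2×2 real matrices. -/
abbrev SL2R := Matrix.SpecialLinearGroup (Fin 2) ℝ

instance : TopologicalSpace SL2R :=
  show TopologicalSpace {A : Matrix (Fin 2) (Fin 2) ℝ // A.det = 1} from inferInstance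

instance : MeasurableSpace SL2R := borel SL2R

/-- Squared Frobenius norm `‖g‖² = a² + b² + c² + d²`. -/
def fnormSq (g : SL2R) : ℝ :=
  (g : Matrix (Fin 2) (Fin 2) ℝ) 0 0 ^ 2 + (g : Matrix (Fin 2) (Fin 2) ℝ) 0 1 ^ 2
    + (g : Matrix (Fin 2) (Fin 2) ℝ) 1 0 ^ 2 + (g : Matrix (Fin 2) (Fin 2) ℝ) 1 1 ^ 2

/-- Frobenius norm `‖g‖`. -/
def fnorm (g : SL2R) : ℝ := Real.sqrt (fnormSq g)

/-- The angle `θ_g = arg((g·i − i)/(g·i + i)) ∈ (−π, π]`; equals `0` when `g·i = i`. -/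
def theta (g : SL2R) : ℝ :=
  Complex.arg ((((g • UpperHalfPlane.I : UpperHalfPlane) : ℂ) - Complex.I)
    / (((g • UpperHalfPlane.I : UpperHalfPlane) : ℂ) + Complex.I))

/-- Distance between two angles: the distance from `a − b` to the nearest element of `2πℤ`. -/
def angDist (a b : ℝ) : ℝ := |((a - b : ℝ) : Real.Angle).toReal|

/-- Inverse hyperbolic cosine. -/
def arccosh (x : ℝ) : ℝ := Real.log (x + Real.sqrt (x ^ 2 - 1))

/-- `ℓ(M) = arccosh(‖M‖²/2)`, the hyperbolic distance from `i` to `M·i`. -/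
def ell (M : SL2R) : ℝ := arccosh (fnormSq M / 2)

/-- The pair-correlation density building block `f_ξ(ℓ)`. -/
def fxi (ξ l : ℝ) : ℝ :=
  if Real.sinh l ≤ ξ then 2 / ξ ^ 2 * l
  else if 2 * Real.sinh (l / 2) ≤ ξ then
    2 / ξ ^ 2 * (l + Real.log (1 + ξ ^ 2)
      - 2 * Real.log (Real.cosh l + Real.sqrt (Real.sinh l ^ 2 - ξ ^ 2)))
  else 2 / ξ ^ 2 * (l - Real.log (Real.cosh l + Real.sqrt (Real.sinh l ^ 2 - ξ ^ 2)))

/-- The rotation matrix `k_φ ∈ SL(2,ℝ)`. -/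
def kMat (φ : ℝ) : SL2R :=
  ⟨!![Real.cos (φ / 2), Real.sin (φ / 2); -Real.sin (φ / 2), Real.cos (φ / 2)], by
    rw [Matrix.det_fin_two_of]
    linear_combination Real.sin_sq_add_cos_sq (φ / 2)⟩

/-- The diagonal matrix `a_t ∈ SL(2,ℝ)`. -/
def aMat (t : ℝ) : SL2R :=
  ⟨!![Real.exp (t / 2), 0; 0, Real.exp (-t / 2)], by
    rw [Matrix.det_fin_two_of, ← Real.exp_add]
    norm_num
    ring⟩

/-!
Multiplying by `a_t` on the left and `a_ℓ` on the right scales the entry `(i, j)` of `g` by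
`e^{±t/2} e^{±ℓ/2}`, so `‖a_t g a_ℓ‖²` weights the squared entries of `g` by `e^{±t ± ℓ}`.
For `g = k_φ` these squared entries are `(1 ± cos φ)/2` by the half-angle formulas, and grouping
gives `(1 + cos φ) cosh (t + ℓ) + (1 - cos φ) cosh (t - ℓ)`, which expands to the claim.
-/

lemma fnormSq_eq_sum_sq (g : SL2R) :
    fnormSq g = ∑ i, ∑ j, (g : Matrix (Fin 2) (Fin 2) ℝ) i j ^ 2 := by
  simp only [fnormSq, Fin.sum_univ_two, add_assoc]

lemma coe_aMat (t : ℝ) :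
    (aMat t : Matrix (Fin 2) (Fin 2) ℝ) = diagonal ![exp (t / 2), exp (-t / 2)] := by
  ext i j
  fin_cases i <;> fin_cases j <;> simp [aMat]

lemma aMat_mul_mul_aMat_apply (t l : ℝ) (g : SL2R) (i j : Fin 2) :
    ((aMat t * g * aMat l : SL2R) : Matrix (Fin 2) (Fin 2) ℝ) i j
      = ![exp (t / 2), exp (-t / 2)] i * (g : Matrix (Fin 2) (Fin 2) ℝ) i j
        * ![exp (l / 2), exp (-l / 2)] j := by
  change ((aMat t : Matrix (Fin 2) (Fin 2) ℝ) * g * aMat l) i j = _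
  simp only [coe_aMat, diagonal_mul, mul_diagonal]

lemma fnormSq_aMat_mul_mul_aMat (t l : ℝ) (g : SL2R) :
    fnormSq (aMat t * g * aMat l)
      = exp (t + l) * (g : Matrix (Fin 2) (Fin 2) ℝ) 0 0 ^ 2
        + exp (t - l) * (g : Matrix (Fin 2) (Fin 2) ℝ) 0 1 ^ 2
        + exp (l - t) * (g : Matrix (Fin 2) (Fin 2) ℝ) 1 0 ^ 2
        + exp (-t - l) * (g : Matrix (Fin 2) (Fin 2) ℝ) 1 1 ^ 2 := by
  have exp_half_mul_sq (a b x : ℝ) : (exp (a / 2) * x * exp (b / 2)) ^ 2 = exp (a + b) * x ^ 2 := by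
    rw [mul_right_comm, mul_pow, ← exp_add, sq (exp _), ← exp_add]
    ring_nf
  simp only [fnormSq_eq_sum_sq, Fin.sum_univ_two, aMat_mul_mul_aMat_apply, cons_val_zero,
    cons_val_one, exp_half_mul_sq, ← sub_eq_add_neg, neg_add_eq_sub, add_assoc]

namespace Real

lemma cos_sq_half (x : ℝ) : cos (x / 2) ^ 2 = (1 + cos x) / 2 := by
  rw [cos_sq, mul_div_cancel₀ x two_ne_zero]; ring

lemma sin_sq_half (x : ℝ) : sin (x / 2) ^ 2 = (1 - cos x) / 2 := by
  rw [sin_sq, cos_sq_half]; ring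

end Real

/-- the squared Frobenius norm of `a_t k_φ a_ℓ`. -/
theorem fnormSq_aMat_kMat_aMat (t φ l : ℝ) :
    fnormSq (aMat t * kMat φ * aMat l)
      = 2 * (Real.cosh l * Real.cosh t + Real.cos φ * Real.sinh l * Real.sinh t) := by
  rw [fnormSq_aMat_mul_mul_aMat]
  simp only [kMat, of_apply, cons_val', cons_val_zero, cons_val_one, empty_val', cons_val_fin_one,
    neg_sq, cos_sq_half, sin_sq_half]
  calc _ = (1 + cos φ) * ((exp (t + l) + exp (-(t + l))) / 2)
          + (1 - cos φ) * ((exp (t - l) + exp (-(t - l))) / 2) := by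
        rw [neg_sub, neg_add']; ring
    _ = (1 + cos φ) * cosh (t + l) + (1 - cos φ) * cosh (t - l) := by rw [cosh_eq, cosh_eq]
    _ = _ := by rw [cosh_add, cosh_sub]; ring
end
end

section
/- Let t > 0, ℓ > 0 and θ, φ, m, ψ ∈ ℝ, and set g := k_θ · a_t · k_φ · k_{−m} and M := k_m · a_ℓ · k_ψ in SL₂(ℝ). Assume cosh ℓ · cosh t + cos φ · sinh ℓ · sinh t > 1 (so that gM·i ≠ i) and cosh ℓ · sinh t + sinh ℓ · cos φ · cosh t ≠ 0. Then tan(θ_{gM} − θ_g) = (sinh ℓ · sin φ) / (cosh ℓ · sinh t + sinh ℓ · cos φ · cosh t). Moreover ‖gM‖² = 2·(cosh ℓ · cosh t + cos φ · sinh ℓ · sinh t) and ‖g‖² = 2·cosh t. -/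
open Matrix MeasureTheory Real Filter Topology
open scoped MatrixGroups Pointwise

noncomputable section

/-!
Under the Cayley transform `w(z) = (z - i)/(z + i)` of the upper half-plane onto the disc,
`θ_g = arg w(g·i)`. Rotations `k_a` fix `i` and act on the disc as multiplication by `e^{ia}`,
so modulo `2π` both `θ_{gM}` and `θ_g` are shifted by `θ`, while the right factors `k_ψ` and
`k_φ k_{-m}` do not move `i`. As `θ_{a_t} = 0` and `k_{-m} k_m = 1`, the left side is `tan θ_P`
with `P = a_t k_φ a_ℓ`. For `g = (a b; c d)` one has
`w(g·i) = ((b + c) + (a - d)i) / ((b - c) + (a + d)i)`, whence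
`tan θ_g = -2(ac + bd) / (a² + b² - c² - d²)`; this and the norms are read off
the entries of `P`.
-/

namespace Real

lemma cos_eq_cos_half_sq_sub_sin_half_sq (x : ℝ) :
    cos x = cos (x / 2) ^ 2 - sin (x / 2) ^ 2 := by
  rw [← cos_two_mul', mul_div_cancel₀ x two_ne_zero]

lemma sin_eq_two_mul_sin_half_mul_cos_half (x : ℝ) :
    sin x = 2 * sin (x / 2) * cos (x / 2) := by
  rw [← sin_two_mul, mul_div_cancel₀ x two_ne_zero]

lemma cosh_eq_exp_half (x : ℝ) : cosh x = (exp (x / 2) ^ 2 + (exp (x / 2) ^ 2)⁻¹) / 2 := by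
  rw [cosh_eq, ← exp_nat_mul, ← exp_neg]
  ring_nf

lemma sinh_eq_exp_half (x : ℝ) : sinh x = (exp (x / 2) ^ 2 - (exp (x / 2) ^ 2)⁻¹) / 2 := by
  rw [sinh_eq, ← exp_nat_mul, ← exp_neg]
  ring_nf

end Real

namespace Complex

lemma ofReal_add_ofReal_mul_I_ne_zero {x y : ℝ} (h : x ≠ 0 ∨ y ≠ 0) :
    (x + y * I : ℂ) ≠ 0 := by
  contrapose! h
  simpa using Complex.ext_iff.mp h

end Complex

namespace SL2R

open Complex
open scoped UpperHalfPlane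

lemma det_eq_one (g : SL2R) : g 0 0 * g 1 1 - g 0 1 * g 1 0 = 1 := by
  rw [← Matrix.det_fin_two]
  exact g.det_coe

lemma kMat_apply (a : ℝ) : (kMat a : Matrix (Fin 2) (Fin 2) ℝ) =
    !![Real.cos (a / 2), Real.sin (a / 2); -Real.sin (a / 2), Real.cos (a / 2)] := rfl

lemma aMat_apply (t : ℝ) : (aMat t : Matrix (Fin 2) (Fin 2) ℝ) =
    !![Real.exp (t / 2), 0; 0, (Real.exp (t / 2))⁻¹] := by
  rw [← Real.exp_neg, ← neg_div]
  rfl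

lemma kMat_add (a b : ℝ) : kMat (a + b) = kMat a * kMat b := by
  refine Subtype.ext ?_
  simp only [Matrix.SpecialLinearGroup.coe_mul, kMat_apply, mul_fin_two, add_div, Real.cos_add,
    Real.sin_add]
  congr 1
  ring_nf

lemma kMat_zero : kMat 0 = 1 := by
  ext i j
  fin_cases i <;> fin_cases j <;> simp [kMat_apply]

lemma aMat_mul_kMat_mul_aMat_apply (t φ l : ℝ) :
    ((aMat t * kMat φ * aMat l : SL2R) : Matrix (Fin 2) (Fin 2) ℝ) =
      !![Real.exp (t / 2) * Real.cos (φ / 2) * Real.exp (l / 2),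
        Real.exp (t / 2) * Real.sin (φ / 2) * (Real.exp (l / 2))⁻¹;
        -((Real.exp (t / 2))⁻¹ * Real.sin (φ / 2) * Real.exp (l / 2)),
        (Real.exp (t / 2))⁻¹ * Real.cos (φ / 2) * (Real.exp (l / 2))⁻¹] := by
  simp only [Matrix.SpecialLinearGroup.coe_mul, aMat_apply, kMat_apply, mul_fin_two]
  congr 1
  ring_nf

lemma fnormSq_kMat_mul (a : ℝ) (g : SL2R) : fnormSq (kMat a * g) = fnormSq g := by
  simp only [fnormSq, Matrix.SpecialLinearGroup.coe_mul, mul_apply, Fin.sum_univ_two, kMat_apply,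
    of_apply, cons_val', cons_val_zero, cons_val_one, empty_val', cons_val_fin_one]
  linear_combination
    (g 0 0 ^ 2 + g 0 1 ^ 2 + g 1 0 ^ 2 + g 1 1 ^ 2) * Real.sin_sq_add_cos_sq (a / 2)

lemma fnormSq_mul_kMat (g : SL2R) (a : ℝ) : fnormSq (g * kMat a) = fnormSq g := by
  simp only [fnormSq, Matrix.SpecialLinearGroup.coe_mul, mul_apply, Fin.sum_univ_two, kMat_apply,
    of_apply, cons_val', cons_val_zero, cons_val_one, empty_val', cons_val_fin_one]
  linear_combination
    (g 0 0 ^ 2 + g 0 1 ^ 2 + g 1 0 ^ 2 + g 1 1 ^ 2) * Real.sin_sq_add_cos_sq (a / 2)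

lemma fnormSq_aMat (t : ℝ) : fnormSq (aMat t) = 2 * Real.cosh t := by
  simp only [fnormSq, aMat_apply, of_apply, cons_val', cons_val_zero, cons_val_one, empty_val',
    cons_val_fin_one]
  rw [Real.cosh_eq_exp_half]
  ring

lemma fnormSq_aMat_mul_kMat_mul_aMat (t φ l : ℝ) : fnormSq (aMat t * kMat φ * aMat l)
    = 2 * (Real.cosh l * Real.cosh t + Real.cos φ * Real.sinh l * Real.sinh t) := by
  simp only [fnormSq, aMat_mul_kMat_mul_aMat_apply, of_apply, cons_val', cons_val_zero,
    cons_val_one, empty_val', cons_val_fin_one]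
  rw [Real.cosh_eq_exp_half l, Real.cosh_eq_exp_half t, Real.sinh_eq_exp_half l,
    Real.sinh_eq_exp_half t, Real.cos_eq_cos_half_sq_sub_sin_half_sq φ]
  linear_combination (Real.exp (t / 2) ^ 2 + (Real.exp (t / 2) ^ 2)⁻¹)
    * (Real.exp (l / 2) ^ 2 + (Real.exp (l / 2) ^ 2)⁻¹) / 2 * Real.sin_sq_add_cos_sq (φ / 2)

def cayley (z : ℍ) : ℂ := ((z : ℂ) - I) / ((z : ℂ) + I)

lemma theta_eq_arg_cayley (g : SL2R) : theta g = arg (cayley (g • UpperHalfPlane.I)) := rfl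

lemma coe_smul (g : SL2R) (z : ℍ) :
    ((g • z : ℍ) : ℂ) = (g 0 0 * z + g 0 1) / (g 1 0 * z + g 1 1) := by
  simp [UpperHalfPlane.coe_specialLinearGroup_apply]

lemma denom_ne_zero (g : SL2R) (z : ℍ) : (g 1 0 * z + g 1 1 : ℂ) ≠ 0 := by
  simpa [UpperHalfPlane.denom] using UpperHalfPlane.denom_ne_zero (SpecialLinearGroup.mapGL ℝ g) z

lemma cayley_smul (g : SL2R) (z : ℍ) :
    cayley (g • z) = ((g 0 0 - g 1 0 * I) * z + (g 0 1 - g 1 1 * I))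
      / ((g 0 0 + g 1 0 * I) * z + (g 0 1 + g 1 1 * I)) := by
  have hd := denom_ne_zero g z
  rw [cayley, coe_smul, div_sub' hd, div_add' _ _ _ hd, div_div_div_cancel_right₀ hd]
  congr 1 <;> ring

lemma cayley_smul_I (g : SL2R) : cayley (g • UpperHalfPlane.I) =
    ((g 0 1 + g 1 0) + (g 0 0 - g 1 1) * I) / ((g 0 1 - g 1 0) + (g 0 0 + g 1 1) * I) := by
  rw [cayley_smul, UpperHalfPlane.coe_I]
  congr 1
  · linear_combination -(g 1 0 : ℂ) * I_sq
  · linear_combination (g 1 0 : ℂ) * I_sq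

lemma cayley_smul_I_denom_ne_zero (g : SL2R) :
    ((g 0 1 - g 1 0 : ℝ) + (g 0 0 + g 1 1 : ℝ) * I : ℂ) ≠ 0 := by
  refine ofReal_add_ofReal_mul_I_ne_zero ?_
  by_contra! h
  have hdet := det_eq_one g
  rw [show g 1 1 = -g 0 0 by linarith, show g 0 1 = g 1 0 by linarith] at hdet
  nlinarith [sq_nonneg (g 0 0), sq_nonneg (g 1 0)]

lemma cayley_smul_I_ne_zero {g : SL2R} (hg : fnormSq g ≠ 2) :
    cayley (g • UpperHalfPlane.I) ≠ 0 := by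
  have hnum : ((g 0 1 + g 1 0 : ℝ) + (g 0 0 - g 1 1 : ℝ) * I : ℂ) ≠ 0 := by
    refine ofReal_add_ofReal_mul_I_ne_zero ?_
    contrapose! hg
    rw [fnormSq]
    nlinarith [det_eq_one g, hg.1, hg.2]
  rw [cayley_smul_I]
  push_cast at hnum
  exact div_ne_zero hnum (by exact_mod_cast cayley_smul_I_denom_ne_zero g)

-- Where the denominator vanishes, `θ_g = ±π/2` and both sides are the junk value `0`.
lemma tan_theta (g : SL2R) : Real.tan (theta g) =
    -2 * (g 0 0 * g 1 0 + g 0 1 * g 1 1) / (g 0 0 ^ 2 + g 0 1 ^ 2 - g 1 0 ^ 2 - g 1 1 ^ 2) := by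
  have hD := cayley_smul_I_denom_ne_zero g
  have hN : normSq ((g 0 1 - g 1 0 : ℝ) + (g 0 0 + g 1 1 : ℝ) * I) ≠ 0 :=
    (normSq_pos.mpr hD).ne'
  push_cast at hN
  rw [theta_eq_arg_cayley, tan_arg, cayley_smul_I, div_re, div_im, ← add_div, ← sub_div,
    div_div_div_cancel_right₀ hN]
  simp only [add_re, add_im, mul_re, mul_im, sub_re, sub_im, ofReal_re, ofReal_im, I_re, I_im]
  ring

lemma cayley_kMat_smul (a : ℝ) (z : ℍ) :
    cayley (kMat a • z) = (Real.cos a + Real.sin a * I) * cayley z := by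
  set c : ℂ := ↑(Real.cos (a / 2)) with hc
  set s : ℂ := ↑(Real.sin (a / 2)) with hs
  have hsc : s ^ 2 + c ^ 2 = 1 := by rw [hs, hc]; exact_mod_cast Real.sin_sq_add_cos_sq (a / 2)
  have hcs : (c + s * I) * (c - s * I) = 1 := by linear_combination hsc - s ^ 2 * I_sq
  have hnum : (c - -s * I) * z + (s - c * I) = (c + s * I) * (z - I) := by
    linear_combination s * I_sq
  have hden : (c + -s * I) * z + (s + c * I) = (c - s * I) * (z + I) := by
    linear_combination s * I_sq
  have hrot : (c + s * I) / (c - s * I) = Real.cos a + Real.sin a * I := by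
    rw [div_eq_iff (right_ne_zero_of_mul_eq_one hcs), Real.cos_eq_cos_half_sq_sub_sin_half_sq a,
      Real.sin_eq_two_mul_sin_half_mul_cos_half a]
    push_cast [← hc, ← hs]
    linear_combination (-c - s * I) * hsc + 2 * s ^ 2 * c * I_sq
  simp only [cayley_smul, kMat_apply, of_apply, cons_val', cons_val_zero, cons_val_one, empty_val',
    cons_val_fin_one, ofReal_neg]
  rw [hnum, hden, mul_div_mul_comm, hrot, cayley]

lemma kMat_smul_I (a : ℝ) : kMat a • UpperHalfPlane.I = UpperHalfPlane.I := by
  ext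
  rw [coe_smul, div_eq_iff (denom_ne_zero _ _)]
  simp only [kMat_apply, of_apply, cons_val', cons_val_zero, cons_val_one, empty_val',
    cons_val_fin_one, UpperHalfPlane.coe_I, ofReal_neg]
  linear_combination (Real.sin (a / 2) : ℂ) * I_sq

lemma theta_mul_kMat (g : SL2R) (a : ℝ) : theta (g * kMat a) = theta g := by
  rw [theta, mul_smul, kMat_smul_I, theta]

lemma theta_kMat_mul (a : ℝ) {g : SL2R} (hg : cayley (g • UpperHalfPlane.I) ≠ 0) :
    (theta (kMat a * g) : Real.Angle) = a + theta g := by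
  have hrot : (Real.cos a + Real.sin a * I : ℂ) ≠ 0 := by
    rw [ofReal_cos, ofReal_sin, cos_add_sin_I]
    exact exp_ne_zero _
  rw [theta_eq_arg_cayley, theta_eq_arg_cayley, mul_smul, cayley_kMat_smul,
    arg_mul_coe_angle hrot hg]
  congr 1
  simpa using arg_cos_add_sin_mul_I_coe_angle (a : Real.Angle)

lemma theta_aMat {t : ℝ} (ht : 0 ≤ t) : theta (aMat t) = 0 := by
  set e := Real.exp (t / 2)
  have hle : e⁻¹ ≤ e := by
    rw [← Real.exp_neg]
    exact Real.exp_le_exp.mpr (by linarith)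
  have hcayley : cayley (aMat t • UpperHalfPlane.I) = ((e - e⁻¹) / (e + e⁻¹) : ℝ) := by
    simp only [cayley_smul_I, aMat_apply, of_apply, cons_val', cons_val_zero, cons_val_one,
      empty_val', cons_val_fin_one, ofReal_zero, ofReal_div, ofReal_sub, ofReal_add, add_zero,
      sub_zero, zero_add]
    exact mul_div_mul_right _ _ I_ne_zero
  rw [theta_eq_arg_cayley, hcayley]
  exact arg_ofReal_of_nonneg (div_nonneg (by linarith) (by positivity))

lemma tan_theta_aMat_mul_kMat_mul_aMat (t φ l : ℝ) :
    Real.tan (theta (aMat t * kMat φ * aMat l)) = Real.sinh l * Real.sin φ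
      / (Real.cosh l * Real.sinh t + Real.sinh l * Real.cos φ * Real.cosh t) := by
  simp only [tan_theta, aMat_mul_kMat_mul_aMat_apply, of_apply, cons_val', cons_val_zero,
    cons_val_one, empty_val', cons_val_fin_one]
  set x := Real.exp (t / 2)
  set y := Real.exp (l / 2)
  set c := Real.cos (φ / 2)
  set s := Real.sin (φ / 2)
  have hx : x ≠ 0 := (Real.exp_pos _).ne'
  have hnum : -2 * (x * c * y * -(x⁻¹ * s * y) + x * s * y⁻¹ * (x⁻¹ * c * y⁻¹))
      = 2 * (Real.sinh l * Real.sin φ) := by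
    rw [show Real.sinh l = (y ^ 2 - (y ^ 2)⁻¹) / 2 from Real.sinh_eq_exp_half l,
      show Real.sin φ = 2 * s * c from Real.sin_eq_two_mul_sin_half_mul_cos_half φ]
    field_simp
    ring
  have hden :
      (x * c * y) ^ 2 + (x * s * y⁻¹) ^ 2 - (-(x⁻¹ * s * y)) ^ 2 - (x⁻¹ * c * y⁻¹) ^ 2
        = 2 * (Real.cosh l * Real.sinh t + Real.sinh l * Real.cos φ * Real.cosh t) := by
    rw [Real.cosh_eq_exp_half l, Real.cosh_eq_exp_half t, Real.sinh_eq_exp_half l,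
      Real.sinh_eq_exp_half t, Real.cos_eq_cos_half_sq_sub_sin_half_sq φ]
    linear_combination
      (x ^ 2 - (x ^ 2)⁻¹) * (y ^ 2 + (y ^ 2)⁻¹) / 2 * Real.sin_sq_add_cos_sq (φ / 2)
  rw [hnum, hden, mul_div_mul_left _ _ two_ne_zero]

end SL2R

open SL2R

theorem tan_angle_difference_general (t l θ φ m ψ : ℝ) (ht : 0 < t)
    (h1 : 1 < Real.cosh l * Real.cosh t + Real.cos φ * Real.sinh l * Real.sinh t) :
    Real.tan (theta (kMat θ * aMat t * kMat φ * kMat (-m) * (kMat m * aMat l * kMat ψ))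
        - theta (kMat θ * aMat t * kMat φ * kMat (-m)))
      = Real.sinh l * Real.sin φ
        / (Real.cosh l * Real.sinh t + Real.sinh l * Real.cos φ * Real.cosh t) ∧
    fnormSq (kMat θ * aMat t * kMat φ * kMat (-m) * (kMat m * aMat l * kMat ψ))
      = 2 * (Real.cosh l * Real.cosh t + Real.cos φ * Real.sinh l * Real.sinh t) ∧
    fnormSq (kMat θ * aMat t * kMat φ * kMat (-m)) = 2 * Real.cosh t := by
  have hgM : kMat θ * aMat t * kMat φ * kMat (-m) * (kMat m * aMat l * kMat ψ)
      = kMat θ * (aMat t * kMat φ * aMat l) * kMat ψ := by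
    simp only [mul_assoc]
    rw [← mul_assoc (kMat (-m)), ← kMat_add, neg_add_cancel, kMat_zero, one_mul]
  have hP : cayley ((aMat t * kMat φ * aMat l) • UpperHalfPlane.I) ≠ 0 :=
    cayley_smul_I_ne_zero (by rw [fnormSq_aMat_mul_kMat_mul_aMat]; linarith)
  have ha : cayley (aMat t • UpperHalfPlane.I) ≠ 0 :=
    cayley_smul_I_ne_zero (by rw [fnormSq_aMat]; linarith [Real.one_lt_cosh.mpr ht.ne'])
  refine ⟨?_, ?_, ?_⟩
  · rw [hgM, theta_mul_kMat, theta_mul_kMat, theta_mul_kMat, ← Real.Angle.tan_coe,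
      Real.Angle.coe_sub, theta_kMat_mul θ hP, theta_kMat_mul θ ha, theta_aMat ht.le,
      Real.Angle.coe_zero, add_zero, add_sub_cancel_left, Real.Angle.tan_coe,
      tan_theta_aMat_mul_kMat_mul_aMat]
  · rw [hgM, fnormSq_mul_kMat, fnormSq_kMat_mul, fnormSq_aMat_mul_kMat_mul_aMat]
  · rw [fnormSq_mul_kMat, fnormSq_mul_kMat, fnormSq_kMat_mul, fnormSq_aMat]

/-- Lemma 2.2: in the coordinates `g = k_θ a_t k_φ k_{−m}`,
`M = k_m a_ℓ k_ψ`, explicit formulas for `tan(θ_{gM} − θ_g)`, `‖gM‖²` and `‖g‖²`. -/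
theorem tan_angle_difference (t l θ φ m ψ : ℝ) (ht : 0 < t) (hl : 0 < l)
    (h1 : 1 < Real.cosh l * Real.cosh t + Real.cos φ * Real.sinh l * Real.sinh t)
    (h2 : Real.cosh l * Real.sinh t + Real.sinh l * Real.cos φ * Real.cosh t ≠ 0) :
    Real.tan (theta (kMat θ * aMat t * kMat φ * kMat (-m) * (kMat m * aMat l * kMat ψ))
        - theta (kMat θ * aMat t * kMat φ * kMat (-m)))
      = Real.sinh l * Real.sin φ
        / (Real.cosh l * Real.sinh t + Real.sinh l * Real.cos φ * Real.cosh t) ∧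
    fnormSq (kMat θ * aMat t * kMat φ * kMat (-m) * (kMat m * aMat l * kMat ψ))
      = 2 * (Real.cosh l * Real.cosh t + Real.cos φ * Real.sinh l * Real.sinh t) ∧
    fnormSq (kMat θ * aMat t * kMat φ * kMat (-m)) = 2 * Real.cosh t :=
  tan_angle_difference_general t l θ φ m ψ ht h1
end
end

section
/- Let g, h ∈ SL₂(ℝ) with g·i ≠ i and gh·i ≠ i, and suppose ‖h‖ ≤ ‖g‖. Then |θ_g − θ_{gh}| ≤ π/2. -/
open Matrix MeasureTheory Real Filter Topology
open scoped MatrixGroups Pointwise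

noncomputable section

/-!
Send `z = g·i` to the unit disc by the Cayley map `z ↦ (z - i)/(z + i)`; `θ_g` is the argument of
the image, so `|θ_g − θ_{gh}| ≤ π/2` says that the images of `z = g·i` and `w = gh·i` have
nonnegative real inner product. Clearing denominators, that inner product is a positive multiple of
`cosh d(i,z) cosh d(i,w) − cosh d(z,w)` (the hyperbolic law of cosines at `i`). Since
`cosh d(i, g·i) = ‖g‖²/2` and `d(g·i, gh·i) = d(i, h·i)` by invariance of the metric, the hypothesis
`‖h‖ ≤ ‖g‖` gives `cosh d(z,w) ≤ cosh d(i,z) ≤ cosh d(i,z) cosh d(i,w)`.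
-/

open ComplexConjugate

namespace Complex

theorem abs_toReal_arg_sub_arg_le_pi_div_two {u v : ℂ} (hu : u ≠ 0) (hv : v ≠ 0)
    (h : 0 ≤ (u * conj v).re) : |((arg u - arg v : ℝ) : Real.Angle).toReal| ≤ π / 2 := by
  rw [Real.Angle.coe_sub, ← arg_div_coe_angle hu hv, arg_coe_angle_toReal_eq_arg,
    abs_arg_le_pi_div_two_iff, div_eq_mul_inv, inv_def, ← mul_assoc, re_mul_ofReal]
  exact mul_nonneg h (inv_nonneg.2 (normSq_nonneg v))

end Complex

namespace UpperHalfPlane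

def cayley (z : ℍ) : ℂ := (z - Complex.I) / (z + Complex.I)

theorem normSq_coe_add_I (z : ℍ) :
    Complex.normSq (z + Complex.I) = z.re ^ 2 + (z.im + 1) ^ 2 := by
  simp [Complex.normSq_apply, sq]

theorem normSq_coe_add_I_pos (z : ℍ) : 0 < Complex.normSq (z + Complex.I) := by
  rw [normSq_coe_add_I]
  nlinarith [z.im_pos]

theorem cayley_ne_zero {z : ℍ} (hz : z ≠ I) : cayley z ≠ 0 :=
  div_ne_zero (sub_ne_zero.2 fun h => hz (UpperHalfPlane.ext h))
    (Complex.normSq_pos.1 (normSq_coe_add_I_pos z))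

theorem cayley_re (z : ℍ) :
    (cayley z).re = (z.re ^ 2 + z.im ^ 2 - 1) / Complex.normSq (z + Complex.I) := by
  rw [cayley, Complex.div_re, ← add_div]
  congr 1
  simp only [Complex.sub_re, coe_re, Complex.I_re, sub_zero, Complex.add_re, add_zero,
    Complex.sub_im, coe_im, Complex.I_im, Complex.add_im]
  ring

theorem cayley_im (z : ℍ) : (cayley z).im = -2 * z.re / Complex.normSq (z + Complex.I) := by
  rw [cayley, Complex.div_im, ← sub_div]
  congr 1
  simp only [Complex.sub_im, coe_im, Complex.I_im, Complex.add_re, coe_re, Complex.I_re, add_zero,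
    Complex.sub_re, sub_zero, Complex.add_im]
  ring

theorem cosh_dist_I (z : ℍ) : cosh (dist I z) = (Complex.normSq z + 1) / (2 * z.im) := by
  rw [cosh_dist', Complex.normSq_apply]
  simp only [I_re, I_im, coe_re, coe_im]
  ring

theorem re_cayley_mul_conj_cayley (z w : ℍ) :
    (cayley z * conj (cayley w)).re
        * (Complex.normSq (z + Complex.I) * Complex.normSq (w + Complex.I))
      = 4 * z.im * w.im * (cosh (dist I z) * cosh (dist I w) - cosh (dist z w)) := by
  have hz := (normSq_coe_add_I_pos z).ne'
  have hw := (normSq_coe_add_I_pos w).ne'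
  have hzi := z.im_pos.ne'
  have hwi := w.im_pos.ne'
  rw [normSq_coe_add_I] at hz hw
  rw [Complex.mul_re, Complex.conj_re, Complex.conj_im, cayley_re, cayley_re, cayley_im,
    cayley_im, normSq_coe_add_I, normSq_coe_add_I, cosh_dist_I, cosh_dist_I, cosh_dist',
    Complex.normSq_apply, Complex.normSq_apply, coe_re, coe_im, coe_re, coe_im]
  field_simp
  ring

theorem re_cayley_mul_conj_cayley_nonneg {z w : ℍ}
    (h : cosh (dist z w) ≤ cosh (dist I z) * cosh (dist I w)) :
    0 ≤ (cayley z * conj (cayley w)).re := by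
  refine nonneg_of_mul_nonneg_left ?_
    (mul_pos (normSq_coe_add_I_pos z) (normSq_coe_add_I_pos w))
  rw [re_cayley_mul_conj_cayley]
  have hz := z.im_pos
  have hw := w.im_pos
  have hcosh := sub_nonneg.2 h
  positivity

theorem cosh_dist_I_smul_I (g : SL(2, ℝ)) : cosh (dist I (g • I)) = fnormSq g / 2 := by
  have hdet : g 0 0 * g 1 1 - g 0 1 * g 1 0 = 1 := by
    have := g.det_coe
    rwa [Matrix.det_fin_two] at this
  have hc : g 1 1 ^ 2 + g 1 0 ^ 2 ≠ 0 := by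
    intro h
    have h0 : g 1 0 = 0 := by nlinarith [sq_nonneg (g 1 0), sq_nonneg (g 1 1)]
    have h1 : g 1 1 = 0 := by nlinarith [sq_nonneg (g 1 0), sq_nonneg (g 1 1)]
    simp [h0, h1] at hdet
  rw [cosh_dist_I, ← coe_im, coe_specialLinearGroup_apply]
  simp only [Algebra.algebraMap_self, RingHom.id_apply, coe_I, map_div₀, Complex.normSq_apply,
    Complex.add_re, Complex.mul_re, Complex.ofReal_re, Complex.I_re, mul_zero, Complex.ofReal_im,
    Complex.I_im, mul_one, sub_self, zero_add, Complex.add_im, Complex.mul_im, add_zero,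
    Complex.div_im, fnormSq]
  rw [← sub_div, hdet]
  field_simp
  ring

end UpperHalfPlane

open UpperHalfPlane

/-- Lemma 2.3: if `‖h‖ ≤ ‖g‖` then `|θ_g − θ_{gh}| ≤ π/2`. -/
theorem angle_diff_le_pi_div_two (g h : SL2R)
    (hg : g • UpperHalfPlane.I ≠ UpperHalfPlane.I)
    (hgh : (g * h) • UpperHalfPlane.I ≠ UpperHalfPlane.I)
    (hn : fnorm h ≤ fnorm g) :
    angDist (theta g) (theta (g * h)) ≤ π / 2 := by
  have hnormSq : fnormSq h ≤ fnormSq g :=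
    (Real.sqrt_le_sqrt_iff (by unfold fnormSq; positivity)).1 hn
  have hcosh : cosh (dist (g • I) ((g * h) • I))
      ≤ cosh (dist I (g • I)) * cosh (dist I ((g * h) • I)) :=
    calc cosh (dist (g • I) ((g * h) • I)) = fnormSq h / 2 := by
          rw [mul_smul, dist_smul, cosh_dist_I_smul_I]
      _ ≤ fnormSq g / 2 := by linarith
      _ = cosh (dist I (g • I)) := (cosh_dist_I_smul_I g).symm
      _ ≤ cosh (dist I (g • I)) * cosh (dist I ((g * h) • I)) :=
          le_mul_of_one_le_right (cosh_pos _).le (one_le_cosh _)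
  exact Complex.abs_toReal_arg_sub_arg_le_pi_div_two (cayley_ne_zero hg) (cayley_ne_zero hgh)
    (re_cayley_mul_conj_cayley_nonneg hcosh)
end
end

section
/- There exist constants C > 0 and δ₀ ∈ (0,1) such that for all δ ∈ (0, δ₀) and all g, h ∈ SL₂(ℝ) with ‖g‖ > 3 and ‖h‖² ≤ 2cosh δ, the following hold: (i) |‖gh‖ − ‖g‖| ≤ C·δ·‖g‖ and |‖hg‖ − ‖g‖| ≤ C·δ·‖g‖; (ii) |arccosh(‖gh‖²/2) − arccosh(‖g‖²/2)| ≤ C·δ and |arccosh(‖hg‖²/2) − arccosh(‖g‖²/2)| ≤ C·δ; (iii) if moreover g·i ≠ i and gh·i ≠ i, then |θ_g − θ_{gh}| ≤ C·δ/‖g‖². -/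
open Matrix MeasureTheory Real Filter Topology
open scoped MatrixGroups Pointwise

noncomputable section

/-!
Since `‖h‖² = σ² + σ⁻²` for the singular values `σ, σ⁻¹` of `h`, the bound `‖h‖² ≤ 2 cosh δ`
says that `h` and `h⁻¹` have operator norm at most `e^{δ/2}`. Hence `‖gh‖²` and `‖hg‖²` lie
between `e^{-δ}‖g‖²` and `e^δ‖g‖²`, which gives (i) and, since `arccosh` is `2`-Lipschitz in the
logarithmic scale away from `1`, also (ii).

For (iii) pass to the disc model: with `w(g) = (g·i − i)/(g·i + i)` we have `θ_g = arg w(g)`, and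
`w(g)/w(gh) − 1` has the explicit squared modulus `4(‖h‖² − 2)/((‖g‖² + 2)(‖gh‖² − 2))`, which is
`O(δ²/‖g‖⁴)`; and `|arg u| ≤ π |u − 1|` once `|u − 1| ≤ 1/2`.
-/

lemma SL2R.det_eq_one_s9 (g : SL2R) : g 0 0 * g 1 1 - g 0 1 * g 1 0 = 1 := by
  rw [← Matrix.det_fin_two]
  exact g.det_coe

lemma fnormSq_inv (g : SL2R) : fnormSq g⁻¹ = fnormSq g := by
  simp only [fnormSq, Matrix.SpecialLinearGroup.SL2_inv_expl, Matrix.cons_val', Matrix.cons_val_zero,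
    Matrix.cons_val_one, Matrix.cons_val_fin_one]
  ring

/-- With `A = !![a, b; c, d]` and `v = (x, y)` this reads `|v A|² ≤ L |v|²`: the form
`L |v|² − |v A|²` has trace `2L − ‖A‖² ≥ 0` and, by Lagrange's identity, determinant
`L² − ‖A‖² L + det(A)² ≥ 0`. -/
lemma sq_add_sq_le_of_det_eq_one {a b c d L : ℝ} (hdet : a * d - b * c = 1) (hL : 1 ≤ L)
    (hF : a ^ 2 + b ^ 2 + c ^ 2 + d ^ 2 ≤ L + L⁻¹) (x y : ℝ) :
    (x * a + y * c) ^ 2 + (x * b + y * d) ^ 2 ≤ L * (x ^ 2 + y ^ 2) := by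
  set A := L - (a ^ 2 + b ^ 2)
  set B := L - (c ^ 2 + d ^ 2)
  set m := a * c + b * d
  have hF' : (a ^ 2 + b ^ 2 + c ^ 2 + d ^ 2) * L ≤ L ^ 2 + 1 := by
    have hL0 : L ≠ 0 := by positivity
    calc _ ≤ (L + L⁻¹) * L := by gcongr
      _ = L ^ 2 + 1 := by field_simp
  have hdisc : m ^ 2 ≤ A * B := by nlinarith [sq_nonneg (a * d - b * c)]
  have hsum : 0 ≤ A + B := by nlinarith
  have hA : 0 ≤ A := by nlinarith [sq_nonneg m]
  have hB : 0 ≤ B := by nlinarith [sq_nonneg m]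
  have hcross : 2 * m * x * y ≤ A * x ^ 2 + B * y ^ 2 := by
    nlinarith [sq_nonneg (A * x ^ 2 - B * y ^ 2), mul_nonneg hA (sq_nonneg x),
      mul_nonneg hB (sq_nonneg y), mul_le_mul_of_nonneg_right hdisc (sq_nonneg (x * y))]
  nlinarith

lemma fnormSq_mul_right_le {L : ℝ} (hL : 1 ≤ L) (g : SL2R) {h : SL2R}
    (hh : fnormSq h ≤ L + L⁻¹) : fnormSq (g * h) ≤ L * fnormSq g := by
  have hrow := sq_add_sq_le_of_det_eq_one h.det_eq_one_s9 hL hh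
  have := hrow (g 0 0) (g 0 1)
  have := hrow (g 1 0) (g 1 1)
  simp only [fnormSq, Matrix.SpecialLinearGroup.coe_mul, Matrix.mul_apply, Fin.sum_univ_two]
  linarith

lemma fnormSq_mul_left_le {L : ℝ} (hL : 1 ≤ L) (g : SL2R) {h : SL2R}
    (hh : fnormSq h ≤ L + L⁻¹) : fnormSq (h * g) ≤ L * fnormSq g := by
  rw [← fnormSq_inv, _root_.mul_inv_rev, ← fnormSq_inv g]
  exact fnormSq_mul_right_le hL _ (by rwa [fnormSq_inv])

lemma inv_mul_fnormSq_le_mul_right {L : ℝ} (hL : 1 ≤ L) (g : SL2R) {h : SL2R}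
    (hh : fnormSq h ≤ L + L⁻¹) : L⁻¹ * fnormSq g ≤ fnormSq (g * h) := by
  have := fnormSq_mul_right_le hL (g * h) (h := h⁻¹) (by rwa [fnormSq_inv])
  rwa [mul_inv_cancel_right, ← inv_mul_le_iff₀ (by positivity)] at this

lemma inv_mul_fnormSq_le_mul_left {L : ℝ} (hL : 1 ≤ L) (g : SL2R) {h : SL2R}
    (hh : fnormSq h ≤ L + L⁻¹) : L⁻¹ * fnormSq g ≤ fnormSq (h * g) := by
  have := fnormSq_mul_left_le hL (h * g) (h := h⁻¹) (by rwa [fnormSq_inv])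
  rwa [inv_mul_cancel_left, ← inv_mul_le_iff₀ (by positivity)] at this

lemma abs_sub_le_of_exp_bounds {x y ε : ℝ} (hx : 0 ≤ x) (hε : 0 ≤ ε) (hε₁ : ε ≤ 1)
    (h₁ : y ≤ exp ε * x) (h₂ : exp (-ε) * x ≤ y) : |y - x| ≤ 2 * ε * x := by
  have hup : exp ε - 1 ≤ 2 * ε := by
    have := Real.abs_exp_sub_one_le (x := ε) (by rwa [abs_of_nonneg hε])
    rw [abs_of_nonneg hε] at this
    exact (le_abs_self _).trans this
  have hlow := Real.one_sub_le_exp_neg ε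
  rw [abs_sub_le_iff]
  constructor <;> nlinarith

lemma abs_sqrt_sub_sqrt_le {x y δ : ℝ} (hδ : 0 ≤ δ) (hδ₂ : δ ≤ 2)
    (h₁ : y ≤ exp δ * x) (h₂ : exp (-δ) * x ≤ y) : |√y - √x| ≤ δ * √x := by
  have hsqrt (t : ℝ) : √(exp t * x) = exp (t / 2) * √x := by
    rw [Real.sqrt_mul (exp_pos t).le, Real.exp_half]
  have := abs_sub_le_of_exp_bounds (Real.sqrt_nonneg x) (by linarith) (by linarith)
    ((Real.sqrt_le_sqrt h₁).trans_eq (hsqrt δ))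
    (by rw [← neg_div, ← hsqrt]; exact Real.sqrt_le_sqrt h₂)
  linarith

lemma arccosh_le_add {x y δ : ℝ} (hδ : 0 ≤ δ) (hx₀ : 0 ≤ x) (hx : 2 ≤ x ^ 2) (hy : 0 < y)
    (hxy : y ≤ exp δ * x) : arccosh y ≤ arccosh x + 2 * δ := by
  have hE : exp (2 * δ) = exp δ ^ 2 := by rw [← Real.exp_nat_mul]; norm_num
  have hE₁ : 1 ≤ exp δ := Real.one_le_exp hδ
  have hy₂ : y ^ 2 ≤ exp δ ^ 2 * x ^ 2 := by rw [← mul_pow]; gcongr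
  -- `e^{2δ} x² − 1 ≤ e^{4δ} (x² − 1)` is where `x² ≥ 2` is needed
  have hroot : √(y ^ 2 - 1) ≤ exp (2 * δ) * √(x ^ 2 - 1) := by
    rw [← Real.sqrt_sq (exp_pos _).le, ← Real.sqrt_mul (sq_nonneg _), hE]
    apply Real.sqrt_le_sqrt
    nlinarith [mul_le_mul_of_nonneg_left hx (sq_nonneg (exp δ)),
      mul_nonneg (sub_nonneg.2 hE₁) (sub_nonneg.2 hE₁)]
  have hlin : y ≤ exp (2 * δ) * x := by
    rw [hE]
    nlinarith
  have hx₁ : 0 < x + √(x ^ 2 - 1) := add_pos_of_pos_of_nonneg (by nlinarith) (Real.sqrt_nonneg _)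
  calc arccosh y ≤ log (exp (2 * δ) * (x + √(x ^ 2 - 1))) :=
        Real.log_le_log (by positivity) (by linarith)
    _ = arccosh x + 2 * δ := by
        rw [Real.log_mul (exp_pos _).ne' hx₁.ne', Real.log_exp, add_comm]
        rfl

lemma abs_arccosh_sub_le {x y δ : ℝ} (hδ : 0 ≤ δ) (hx₀ : 0 ≤ x) (hx : 2 ≤ x ^ 2)
    (hy₀ : 0 ≤ y) (hy : 2 ≤ y ^ 2) (h₁ : y ≤ exp δ * x) (h₂ : exp (-δ) * x ≤ y) :
    |arccosh y - arccosh x| ≤ 2 * δ := by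
  have h₂' : x ≤ exp δ * y := by rwa [Real.exp_neg, inv_mul_le_iff₀ (exp_pos δ)] at h₂
  have hyx := arccosh_le_add hδ hx₀ hx (by nlinarith) h₁
  have hxy := arccosh_le_add hδ hy₀ hy (by nlinarith) h₂'
  rw [abs_sub_le_iff]
  constructor <;> linarith

lemma two_mul_cosh_sub_two_le {δ : ℝ} (hδ : |δ| ≤ 1) : 2 * cosh δ - 2 ≤ 4 * δ ^ 2 := by
  have h₁ := Real.abs_exp_sub_one_le hδ
  have h₂ := Real.abs_exp_sub_one_le (x := -δ) (by rwa [abs_neg])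
  rw [abs_neg, abs_sub_comm] at h₂
  calc 2 * cosh δ - 2 = (exp δ - 1) * (1 - exp (-δ)) := by
        rw [Real.cosh_eq, Real.exp_neg]
        field_simp
        ring
    _ ≤ |exp δ - 1| * |1 - exp (-δ)| := (le_abs_self _).trans_eq (abs_mul _ _)
    _ ≤ (2 * |δ|) * (2 * |δ|) := by gcongr
    _ = 4 * δ ^ 2 := by rw [← sq_abs δ]; ring

lemma abs_arg_le_pi_mul_norm_sub_one {u : ℂ} (hu : ‖u - 1‖ ≤ 1 / 2) :
    |Complex.arg u| ≤ π * ‖u - 1‖ := by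
  have hre : 1 / 2 ≤ u.re := by
    have := (Complex.abs_re_le_norm (u - 1)).trans hu
    rw [Complex.sub_re, Complex.one_re, abs_le] at this
    linarith
  have hnorm : 1 / 2 ≤ ‖u‖ := hre.trans (Complex.re_le_norm u)
  have him : |u.im| ≤ ‖u - 1‖ := by simpa using Complex.abs_im_le_norm (u - 1)
  have hjordan := Real.mul_abs_le_abs_sin (Complex.abs_arg_le_pi_div_two_iff.mpr (by linarith))
  rw [Complex.sin_arg, abs_div, abs_norm, le_div_iff₀ (by linarith)] at hjordan
  have hscaled : 2 / π * |Complex.arg u| * (1 / 2) ≤ ‖u - 1‖ := by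
    have : 0 ≤ 2 / π * |Complex.arg u| := by positivity
    nlinarith
  calc |Complex.arg u| = π * (2 / π * |Complex.arg u| * (1 / 2)) := by
        field_simp [Real.pi_pos.ne']
    _ ≤ π * ‖u - 1‖ := by gcongr

lemma angDist_arg {x y : ℂ} (hx : x ≠ 0) (hy : y ≠ 0) :
    angDist (Complex.arg x) (Complex.arg y) = |Complex.arg (x / y)| := by
  rw [angDist, Real.Angle.coe_sub, ← Complex.arg_div_coe_angle hx hy,
    Complex.arg_coe_angle_toReal_eq_arg]

def cayley (g : SL2R) : ℂ :=
  ((g • UpperHalfPlane.I : UpperHalfPlane) - Complex.I) /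
    ((g • UpperHalfPlane.I : UpperHalfPlane) + Complex.I)

lemma theta_eq_arg_cayley (g : SL2R) : theta g = Complex.arg (cayley g) := rfl

def cayleyNum (g : SL2R) : ℂ := ⟨g 0 1 + g 1 0, g 0 0 - g 1 1⟩

def cayleyDen (g : SL2R) : ℂ := ⟨g 0 1 - g 1 0, g 0 0 + g 1 1⟩

lemma cayley_eq_div (g : SL2R) : cayley g = cayleyNum g / cayleyDen g := by
  have hden : (g 1 0 : ℂ) * Complex.I + g 1 1 ≠ 0 := by
    simpa [UpperHalfPlane.denom] using
      UpperHalfPlane.denom_ne_zero (Matrix.SpecialLinearGroup.mapGL ℝ g) UpperHalfPlane.I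
  rw [cayley, UpperHalfPlane.coe_specialLinearGroup_apply]
  simp only [Algebra.algebraMap_self_apply, UpperHalfPlane.coe_I]
  rw [div_sub' hden, div_add' _ _ _ hden, div_div_div_cancel_right₀ hden]
  congr 1 <;> apply Complex.ext <;> simp [cayleyNum, cayleyDen, sub_eq_add_neg]

lemma cayley_ne_zero {g : SL2R} (hg : g • UpperHalfPlane.I ≠ UpperHalfPlane.I) :
    cayley g ≠ 0 := by
  refine div_ne_zero (sub_ne_zero.2 fun h => hg (UpperHalfPlane.ext h)) fun h => ?_
  have := congrArg Complex.im h
  simp only [Complex.add_im, UpperHalfPlane.coe_im, Complex.I_im, Complex.zero_im] at this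
  linarith [(g • UpperHalfPlane.I).im_pos]

lemma normSq_cayleyNum (g : SL2R) : Complex.normSq (cayleyNum g) = fnormSq g - 2 := by
  rw [cayleyNum, Complex.normSq_mk, fnormSq]
  linear_combination (-2) * g.det_eq_one_s9

lemma normSq_cayleyDen (g : SL2R) : Complex.normSq (cayleyDen g) = fnormSq g + 2 := by
  rw [cayleyDen, Complex.normSq_mk, fnormSq]
  linear_combination 2 * g.det_eq_one_s9

lemma two_le_fnormSq (g : SL2R) : 2 ≤ fnormSq g := by
  linarith [normSq_cayleyNum g, Complex.normSq_nonneg (cayleyNum g)]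

lemma cayleyDen_ne_zero (g : SL2R) : cayleyDen g ≠ 0 := by
  rw [← Complex.normSq_pos, normSq_cayleyDen]
  linarith [two_le_fnormSq g]

lemma cayleyNum_mul_cayleyDen_sub (g h : SL2R) :
    cayleyNum (g * h) * cayleyDen g - cayleyNum g * cayleyDen (g * h) =
      2 * Complex.I * cayleyNum h := by
  have hg := g.det_eq_one_s9
  apply Complex.ext <;>
    simp only [cayleyNum, cayleyDen, Matrix.SpecialLinearGroup.coe_mul, Matrix.mul_apply,
      Fin.sum_univ_two, Complex.sub_re, Complex.sub_im, Complex.mul_re, Complex.mul_im,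
      Complex.re_ofNat, Complex.im_ofNat, Complex.I_re, Complex.I_im]
  · linear_combination 2 * (h 1 1 - h 0 0) * hg
  · linear_combination 2 * (h 0 1 + h 1 0) * hg

lemma normSq_cayley_div_sub_one {g h : SL2R} (hgh : cayley (g * h) ≠ 0) :
    Complex.normSq (cayley g / cayley (g * h) - 1) =
      4 * (fnormSq h - 2) / ((fnormSq g + 2) * (fnormSq (g * h) - 2)) := by
  have hN : cayleyNum (g * h) ≠ 0 := by
    rw [cayley_eq_div] at hgh
    exact left_ne_zero_of_mul hgh
  have hratio : cayley g / cayley (g * h) - 1 =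
      -(2 * Complex.I * cayleyNum h) / (cayleyDen g * cayleyNum (g * h)) := by
    rw [cayley_eq_div, cayley_eq_div, ← cayleyNum_mul_cayleyDen_sub]
    field_simp [cayleyDen_ne_zero g, cayleyDen_ne_zero (g * h), hN]
    ring
  rw [hratio, Complex.normSq_div, Complex.normSq_neg, Complex.normSq_mul, Complex.normSq_mul,
    Complex.normSq_mul, Complex.normSq_I, normSq_cayleyNum, normSq_cayleyNum, normSq_cayleyDen]
  norm_num

lemma angDist_theta_mul_le {g h : SL2R} {δ : ℝ} (hδ : 0 ≤ δ) (hδg : 10 * δ ≤ fnormSq g)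
    (hh : fnormSq h - 2 ≤ 4 * δ ^ 2) (hgh : fnormSq g ≤ 3 / 2 * (fnormSq (g * h) - 2))
    (hgI : g • UpperHalfPlane.I ≠ UpperHalfPlane.I)
    (hghI : (g * h) • UpperHalfPlane.I ≠ UpperHalfPlane.I) :
    angDist (theta g) (theta (g * h)) ≤ 20 * δ / fnormSq g := by
  set T := fnormSq g
  have hT : 2 ≤ T := two_le_fnormSq g
  have hu : ‖cayley g / cayley (g * h) - 1‖ ≤ 5 * δ / T := by
    have hden : 2 / 3 * T ^ 2 ≤ (T + 2) * (fnormSq (g * h) - 2) := by nlinarith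
    have hsq : Complex.normSq (cayley g / cayley (g * h) - 1) ≤ (5 * δ / T) ^ 2 := by
      rw [normSq_cayley_div_sub_one (cayley_ne_zero hghI), div_pow,
        div_le_div_iff₀ (by nlinarith) (by positivity)]
      nlinarith [sq_nonneg δ, sq_nonneg T]
    rw [← Complex.sq_norm] at hsq
    exact le_of_sq_le_sq hsq (by positivity)
  have hsmall : 5 * δ / T ≤ 1 / 2 := by
    rw [div_le_iff₀ (by positivity)]
    linarith
  calc angDist (theta g) (theta (g * h))
      = |Complex.arg (cayley g / cayley (g * h))| := by
        rw [theta_eq_arg_cayley, theta_eq_arg_cayley,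
          angDist_arg (cayley_ne_zero hgI) (cayley_ne_zero hghI)]
    _ ≤ π * ‖cayley g / cayley (g * h) - 1‖ := abs_arg_le_pi_mul_norm_sub_one (hu.trans hsmall)
    _ ≤ 4 * (5 * δ / T) := by gcongr; exact Real.pi_le_four
    _ = 20 * δ / T := by ring

/-- Lemma 2.4: perturbation estimates for the norm, the displacement
`ℓ = arccosh(‖·‖²/2)` and the angle, under multiplication by an element of `B_{δ₁}`. -/
theorem perturbation_estimates :
    ∃ C > (0:ℝ), ∃ δ₀ : ℝ, 0 < δ₀ ∧ δ₀ < 1 ∧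
      ∀ δ : ℝ, 0 < δ → δ < δ₀ → ∀ g h : SL2R,
        3 < fnorm g → fnormSq h ≤ 2 * Real.cosh δ →
        (|fnorm (g * h) - fnorm g| ≤ C * δ * fnorm g ∧
         |fnorm (h * g) - fnorm g| ≤ C * δ * fnorm g) ∧
        (|arccosh (fnormSq (g * h) / 2) - arccosh (fnormSq g / 2)| ≤ C * δ ∧
         |arccosh (fnormSq (h * g) / 2) - arccosh (fnormSq g / 2)| ≤ C * δ) ∧
        (g • UpperHalfPlane.I ≠ UpperHalfPlane.I →
          (g * h) • UpperHalfPlane.I ≠ UpperHalfPlane.I →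
          angDist (theta g) (theta (g * h)) ≤ C * δ / fnormSq g) := by
  refine ⟨20, by norm_num, 1 / 10, by norm_num, by norm_num, fun δ hδ hδ₀ g h hg hh => ?_⟩
  have hT : 9 < fnormSq g := by linarith [(Real.lt_sqrt (by norm_num)).1 hg]
  have hL : 1 ≤ exp δ := Real.one_le_exp hδ.le
  have hh' : fnormSq h ≤ exp δ + (exp δ)⁻¹ := by
    rw [← Real.exp_neg]
    linarith [Real.cosh_eq δ]
  have hexp : 1 - δ ≤ (exp δ)⁻¹ := Real.exp_neg δ ▸ Real.one_sub_le_exp_neg δ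
  have estimates (k : SL2R) (h₁ : fnormSq k ≤ exp δ * fnormSq g)
      (h₂ : (exp δ)⁻¹ * fnormSq g ≤ fnormSq k) :
      |fnorm k - fnorm g| ≤ 20 * δ * fnorm g ∧
        |arccosh (fnormSq k / 2) - arccosh (fnormSq g / 2)| ≤ 20 * δ := by
    have hk : 8 ≤ fnormSq k := by nlinarith
    rw [← Real.exp_neg] at h₂
    refine ⟨(abs_sqrt_sub_sqrt_le hδ.le (by linarith) h₁ h₂).trans ?_,
      (abs_arccosh_sub_le hδ.le (by positivity) (by nlinarith) (by positivity) (by nlinarith)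
        (by linarith) (by linarith)).trans (by linarith)⟩
    have := mul_nonneg hδ.le (Real.sqrt_nonneg (fnormSq g))
    rw [fnorm]
    linarith
  obtain ⟨hnr, har⟩ := estimates (g * h) (fnormSq_mul_right_le hL g hh')
    (inv_mul_fnormSq_le_mul_right hL g hh')
  obtain ⟨hnl, hal⟩ := estimates (h * g) (fnormSq_mul_left_le hL g hh')
    (inv_mul_fnormSq_le_mul_left hL g hh')
  refine ⟨⟨hnr, hnl⟩, ⟨har, hal⟩, fun hgI hghI =>
    angDist_theta_mul_le hδ.le (by linarith) ?_ ?_ hgI hghI⟩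
  · linarith [two_mul_cosh_sub_two_le (δ := δ) (by rw [abs_of_pos hδ]; linarith)]
  · nlinarith [inv_mul_fnormSq_le_mul_right hL g hh']
end
end

section
/- There is an absolute constant C > 0 such that for all ξ > 0 and all ℓ ≥ 1 with 2·sinh(ℓ/2) ≥ ξ, one has f_ξ(ℓ) ≤ C·e^{−2ℓ}. Consequently, for every ξ₀ > 0 there exist C′ > 0 and L > 0 such that f_ξ(ℓ) ≤ C′·e^{−2ℓ} for all ξ ∈ (0, ξ₀] and all ℓ ≥ L. -/
open Matrix MeasureTheory Real Filter Topology
open scoped MatrixGroups Pointwise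

noncomputable section

lemma bound3 (ξ l : ℝ) (hξ : 0 < ξ) (hl : 1 ≤ l) (hξB : ξ < Real.sinh l) :
    2 / ξ ^ 2 * (l - Real.log (Real.cosh l + Real.sqrt (Real.sinh l ^ 2 - ξ ^ 2)))
      ≤ 16 * Real.exp (-2 * l) := by
  set B := Real.sinh l with hB
  set A := Real.cosh l with hA
  have hl0 : (0:ℝ) < l := lt_of_lt_of_le one_pos hl
  have hBpos : 0 < B := Real.sinh_pos_iff.mpr hl0
  have hApos : 0 < A := hA ▸ Real.cosh_pos l
  set S := Real.sqrt (B ^ 2 - ξ ^ 2) with hS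
  have hS0 : 0 ≤ S := Real.sqrt_nonneg _
  have hSsq : S ^ 2 = B ^ 2 - ξ ^ 2 := Real.sq_sqrt (by nlinarith)
  have hAB : A + B = Real.exp l := Real.cosh_add_sinh l
  have hASpos : 0 < A + S := by positivity
  have hlog : l - Real.log (A + S) = Real.log ((A + B) / (A + S)) := by
    rw [Real.log_div (by positivity) (ne_of_gt hASpos)]
    rw [hAB, Real.log_exp]
  have hlogle : Real.log ((A + B) / (A + S)) ≤ ξ ^ 2 / ((B + S) * (A + S)) := by
    have h := Real.log_le_sub_one_of_pos (x := (A + B) / (A + S)) (by positivity)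
    have heq : (A + B) / (A + S) - 1 = ξ ^ 2 / ((B + S) * (A + S)) := by
      rw [div_sub_one (ne_of_gt hASpos)]
      rw [div_eq_div_iff (ne_of_gt hASpos) (by positivity)]
      nlinarith [hSsq]
    linarith [heq ▸ h]
  have hexp2 : Real.exp (2 * l) = Real.exp l * Real.exp l := by
    rw [two_mul, Real.exp_add]
  have hexpl : (2:ℝ) ≤ Real.exp l := by
    have := Real.add_one_le_exp (1:ℝ)
    have h2 := Real.exp_le_exp.mpr hl
    linarith
  have hcosh : Real.exp l / 2 ≤ A := by
    rw [hA, Real.cosh_eq]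
    have := Real.exp_pos (-l)
    linarith
  have hsinh : Real.exp l / 4 ≤ B := by
    rw [hB, Real.sinh_eq]
    have h1 : Real.exp (-l) ≤ 1 := Real.exp_le_one_iff.mpr (by linarith)
    linarith
  have hprod : Real.exp (2 * l) / 8 ≤ (B + S) * (A + S) := by
    have h1 : B * A ≤ (B + S) * (A + S) := by nlinarith
    nlinarith [hexp2, Real.exp_pos l]
  have key : 2 / ξ ^ 2 * (l - Real.log (A + S)) ≤ 2 / ((B + S) * (A + S)) := by
    rw [hlog]
    calc 2 / ξ ^ 2 * Real.log ((A + B) / (A + S))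
        ≤ 2 / ξ ^ 2 * (ξ ^ 2 / ((B + S) * (A + S))) := by
          apply mul_le_mul_of_nonneg_left hlogle (by positivity)
      _ = 2 / ((B + S) * (A + S)) := by
          field_simp
  calc 2 / ξ ^ 2 * (l - Real.log (A + S)) ≤ 2 / ((B + S) * (A + S)) := key
    _ ≤ 2 / (Real.exp (2 * l) / 8) := by
        apply div_le_div_of_nonneg_left (by norm_num) (by positivity) hprod
    _ = 16 * Real.exp (-2 * l) := by
        rw [neg_mul, Real.exp_neg]
        field_simp
        ring

lemma twoSinhHalf_lt (l : ℝ) (hl : 1 ≤ l) : 2 * Real.sinh (l / 2) < Real.sinh l := by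
  have hl2 : (0:ℝ) < l / 2 := by linarith
  have hs : 0 < Real.sinh (l / 2) := Real.sinh_pos_iff.mpr hl2
  have hc : 1 < Real.cosh (l / 2) := by
    rw [Real.one_lt_cosh]
    exact ne_of_gt hl2
  have h2 : Real.sinh l = 2 * Real.sinh (l / 2) * Real.cosh (l / 2) := by
    have := Real.sinh_two_mul (l / 2)
    rw [show 2 * (l / 2) = l by ring] at this
    linarith [this]
  nlinarith

lemma fxi_eq (ξ l : ℝ) (hξ : 0 < ξ) (hl : 1 ≤ l) (h : ξ ≤ 2 * Real.sinh (l / 2)) :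
    fxi ξ l = 2 / ξ ^ 2 * (l - Real.log (Real.cosh l + Real.sqrt (Real.sinh l ^ 2 - ξ ^ 2))) := by
  have hlt := twoSinhHalf_lt l hl
  have hξB : ξ < Real.sinh l := lt_of_le_of_lt h hlt
  rw [fxi, if_neg (not_le.mpr hξB)]
  by_cases hmid : 2 * Real.sinh (l / 2) ≤ ξ
  · have heq : ξ = 2 * Real.sinh (l / 2) := le_antisymm h hmid
    rw [if_pos hmid]
    set s := Real.sinh (l / 2) with hs
    have hspos : 0 < s := Real.sinh_pos_iff.mpr (by linarith)
    have hB : Real.sinh l = 2 * s * Real.cosh (l / 2) := by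
      have := Real.sinh_two_mul (l / 2)
      rw [show 2 * (l / 2) = l by ring] at this
      linarith [this]
    have hcsq : Real.cosh (l / 2) ^ 2 = 1 + s ^ 2 := by
      have := Real.cosh_sq (l / 2)
      linarith [this]
    have hA : Real.cosh l = 1 + 2 * s ^ 2 := by
      have := Real.cosh_two_mul (l / 2)
      rw [show 2 * (l / 2) = l by ring] at this
      rw [this, hcsq]; ring
    have hSval : Real.sqrt (Real.sinh l ^ 2 - ξ ^ 2) = 2 * s ^ 2 := by
      rw [heq, hB]
      rw [show (2 * s * Real.cosh (l / 2)) ^ 2 - (2 * s) ^ 2 = (2 * s ^ 2) ^ 2 by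
        nlinarith [hcsq]]
      exact Real.sqrt_sq (by positivity)
    have h1 : 1 + ξ ^ 2 = Real.cosh l + Real.sqrt (Real.sinh l ^ 2 - ξ ^ 2) := by
      rw [hSval, hA, heq]; ring
    rw [h1]; ring
  · rw [if_neg hmid]

lemma fxi_main (ξ l : ℝ) (hξ : 0 < ξ) (hl : 1 ≤ l) (h : ξ ≤ 2 * Real.sinh (l / 2)) :
    fxi ξ l ≤ 16 * Real.exp (-2 * l) := by
  rw [fxi_eq ξ l hξ hl h]
  exact bound3 ξ l hξ hl (lt_of_le_of_lt h (twoSinhHalf_lt l hl))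

/-- decay estimate (1.13): `f_ξ(ℓ) ≪ e^{−2ℓ}`, uniformly for `ξ ≤ ξ₀`. -/
theorem fxi_decay :
    (∃ C > (0:ℝ), ∀ ξ l : ℝ, 0 < ξ → 1 ≤ l → ξ ≤ 2 * Real.sinh (l / 2) →
      fxi ξ l ≤ C * Real.exp (-2 * l)) ∧
    ∀ ξ₀ : ℝ, 0 < ξ₀ → ∃ C' > (0:ℝ), ∃ L > (0:ℝ), ∀ ξ l : ℝ, 0 < ξ → ξ ≤ ξ₀ → L ≤ l →
      fxi ξ l ≤ C' * Real.exp (-2 * l) := by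
  constructor
  · exact ⟨16, by norm_num, fun ξ l hξ hl h => fxi_main ξ l hξ hl h⟩
  · intro ξ₀ hξ₀
    refine ⟨16, by norm_num, max 1 ξ₀, lt_of_lt_of_le one_pos (le_max_left _ _), ?_⟩
    intro ξ l hξ hξ₀' hL
    have hl : 1 ≤ l := le_trans (le_max_left _ _) hL
    have hl2 : 0 < l / 2 := by linarith
    have h : ξ ≤ 2 * Real.sinh (l / 2) := by
      have h1 : l / 2 < Real.sinh (l / 2) := Real.self_lt_sinh_iff.mpr hl2
      have h2 : ξ₀ ≤ l := le_trans (le_max_right _ _) hL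
      linarith
    exact fxi_main ξ l hξ hl h
end
end

section
/- Fix ξ > 0 and set ℓ₁ := arcsinh(ξ) and ℓ₂ := 2·arcsinh(ξ/2). The function ℓ ↦ f_ξ(ℓ) is differentiable at every ℓ ∈ (0,∞) \ {ℓ₁, ℓ₂}, with derivative: f_ξ′(ℓ) = 2/ξ² for 0 < ℓ < ℓ₁; f_ξ′(ℓ) = (2/ξ²)·(1 − 2·sinh ℓ/√(sinh²ℓ − ξ²)) for ℓ₁ < ℓ < ℓ₂; and f_ξ′(ℓ) = (2/ξ²)·(1 − sinh ℓ/√(sinh²ℓ − ξ²)) for ℓ > ℓ₂. -/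
/-!
Since `sinh` and `x ↦ 2 sinh (x / 2)` are increasing, the three regimes of `f_ξ` are the
intervals cut out by `ℓ₁ = arsinh ξ ≤ ℓ₂ = 2 arsinh (ξ / 2)`. Away from these two points `f_ξ`
agrees near `ℓ` with a single smooth branch, so its derivative is that of the branch; the only
computation is `d/dℓ log (cosh ℓ + √(sinh² ℓ - ξ²)) = sinh ℓ / √(sinh² ℓ - ξ²)`.
-/

open Matrix MeasureTheory Real Filter Topology
open scoped MatrixGroups Pointwise

noncomputable section

namespace Real

theorem sinh_le_iff_le_arsinh {x y : ℝ} : sinh x ≤ y ↔ x ≤ arsinh y := by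
  rw [← sinh_le_sinh (y := arsinh y), sinh_arsinh]

theorem two_mul_sinh_half_le_iff {x y : ℝ} : 2 * sinh (x / 2) ≤ y ↔ x ≤ 2 * arsinh (y / 2) := by
  rw [← le_div_iff₀' two_pos, sinh_le_iff_le_arsinh, div_le_iff₀' two_pos]

theorem arsinh_le_two_mul_arsinh_half {x : ℝ} (hx : 0 ≤ x) : arsinh x ≤ 2 * arsinh (x / 2) := by
  rw [← sinh_le_sinh, sinh_arsinh, sinh_two_mul, sinh_arsinh, cosh_arsinh]
  have : 1 ≤ √(1 + (x / 2) ^ 2) := one_le_sqrt.mpr (by nlinarith)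
  nlinarith

theorem sq_lt_sinh_sq_of_arsinh_lt {ξ l : ℝ} (hξ : 0 ≤ ξ) (h : arsinh ξ < l) :
    ξ ^ 2 < sinh l ^ 2 := by
  have : ξ < sinh l := by simpa using sinh_le_iff_le_arsinh.not.mpr h.not_ge
  exact pow_lt_pow_left₀ this hξ two_ne_zero

/-- The factor `cosh x + √(sinh² x - c²)` cancels from the derivative of the logarithm. -/
theorem hasDerivAt_log_cosh_add_sqrt {c l : ℝ} (h : c ^ 2 < sinh l ^ 2) :
    HasDerivAt (fun x => log (cosh x + √(sinh x ^ 2 - c ^ 2)))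
      (sinh l / √(sinh l ^ 2 - c ^ 2)) l := by
  have hpos : 0 < sinh l ^ 2 - c ^ 2 := sub_pos.mpr h
  have hsum : 0 < cosh l + √(sinh l ^ 2 - c ^ 2) := by positivity
  have hinner : HasDerivAt (fun x => cosh x + √(sinh x ^ 2 - c ^ 2))
      (sinh l + 2 * sinh l * cosh l / (2 * √(sinh l ^ 2 - c ^ 2))) l := by
    simpa using (hasDerivAt_cosh l).fun_add
      ((((hasDerivAt_sinh l).fun_pow 2).sub_const (c ^ 2)).sqrt hpos.ne')
  convert hinner.log hsum.ne' using 1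
  field_simp
  ring

end Real

theorem fxi_of_le_arsinh {ξ l : ℝ} (h : l ≤ arsinh ξ) : fxi ξ l = 2 / ξ ^ 2 * l := by
  rw [fxi, if_pos (sinh_le_iff_le_arsinh.mpr h)]

theorem fxi_of_arsinh_lt_of_le {ξ l : ℝ} (h₁ : arsinh ξ < l) (h₂ : l ≤ 2 * arsinh (ξ / 2)) :
    fxi ξ l = 2 / ξ ^ 2 * (l + log (1 + ξ ^ 2) - 2 * log (cosh l + √(sinh l ^ 2 - ξ ^ 2))) := by
  rw [fxi, if_neg (sinh_le_iff_le_arsinh.not.mpr h₁.not_ge),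
    if_pos (two_mul_sinh_half_le_iff.mpr h₂)]

theorem fxi_of_two_mul_arsinh_half_lt {ξ l : ℝ} (hξ : 0 ≤ ξ) (h : 2 * arsinh (ξ / 2) < l) :
    fxi ξ l = 2 / ξ ^ 2 * (l - log (cosh l + √(sinh l ^ 2 - ξ ^ 2))) := by
  have h₁ : arsinh ξ < l := (arsinh_le_two_mul_arsinh_half hξ).trans_lt h
  rw [fxi, if_neg (sinh_le_iff_le_arsinh.not.mpr h₁.not_ge),
    if_neg (two_mul_sinh_half_le_iff.not.mpr h.not_ge)]

/-- formula (2.22): the derivative of `ℓ ↦ f_ξ(ℓ)` away from the two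
points of non-differentiability `ℓ₁ = arcsinh ξ` and `ℓ₂ = 2 arcsinh(ξ/2)`. -/
theorem fxi_hasDerivAt (ξ : ℝ) (hξ : 0 < ξ) :
    (∀ l : ℝ, 0 < l → l < Real.arsinh ξ →
      HasDerivAt (fun x => fxi ξ x) (2 / ξ ^ 2) l) ∧
    (∀ l : ℝ, Real.arsinh ξ < l → l < 2 * Real.arsinh (ξ / 2) →
      HasDerivAt (fun x => fxi ξ x)
        (2 / ξ ^ 2 * (1 - 2 * Real.sinh l / Real.sqrt (Real.sinh l ^ 2 - ξ ^ 2))) l) ∧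
    (∀ l : ℝ, 2 * Real.arsinh (ξ / 2) < l →
      HasDerivAt (fun x => fxi ξ x)
        (2 / ξ ^ 2 * (1 - Real.sinh l / Real.sqrt (Real.sinh l ^ 2 - ξ ^ 2))) l) := by
  refine ⟨fun l _ hl => ?_, fun l hl₁ hl₂ => ?_, fun l hl => ?_⟩
  · have hfxi : (fxi ξ ·) =ᶠ[𝓝 l] fun x => 2 / ξ ^ 2 * x :=
      (eventually_lt_nhds hl).mono fun x hx => fxi_of_le_arsinh hx.le
    simpa using ((hasDerivAt_id l).const_mul (2 / ξ ^ 2)).congr_of_eventuallyEq hfxi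
  · have hfxi := eventually_of_mem (Ioo_mem_nhds hl₁ hl₂) fun x hx =>
      fxi_of_arsinh_lt_of_le hx.1 hx.2.le
    have hlog := hasDerivAt_log_cosh_add_sqrt (sq_lt_sinh_sq_of_arsinh_lt hξ.le hl₁)
    exact (((((hasDerivAt_id l).add_const _).sub (hlog.const_mul 2)).const_mul
      (2 / ξ ^ 2)).congr_of_eventuallyEq hfxi).congr_deriv (by ring)
  · have hfxi := (eventually_gt_nhds hl).mono fun x hx => fxi_of_two_mul_arsinh_half_lt hξ.le hx
    have hl₁ := (arsinh_le_two_mul_arsinh_half hξ.le).trans_lt hl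
    have hlog := hasDerivAt_log_cosh_add_sqrt (sq_lt_sinh_sq_of_arsinh_lt hξ.le hl₁)
    exact (((hasDerivAt_id l).sub hlog).const_mul (2 / ξ ^ 2)).congr_of_eventuallyEq hfxi
end
end

section
/- There exist constants C > 0 and ξ₀ ≥ 1 such that for all ξ ≥ ξ₀: |∫₀^∞ f_ξ(t)·sinh(t) dt − 1| ≤ C/ξ². -/
open Matrix MeasureTheory Real Filter Topology
open scoped MatrixGroups Pointwise

noncomputable section

/-! The integral equals `1` exactly for every `ξ > 0`. The branches of `f_ξ` change at
`t₁ = arsinh ξ` and `t₂ = 2 arsinh (ξ/2)`, and on each range the integrand has an explicit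
primitive: `t cosh t - sinh t` for `t sinh t`, and `G cosh t - R` for `G sinh t`, where
`R = √(sinh² t - ξ²)` and `G = log (cosh t + R)`. At `t₁` one has `R = 0`, `G = log (1 + ξ²)/2`,
at `t₂` one has `R = ξ²/2`, `G = log (1 + ξ²)`, and the primitive of `(t - G) sinh t` on the last
range is `O(ξ² / sinh t)` at infinity; the boundary terms telescope to `(2/ξ²) · (ξ²/2)`. -/

section PiecewiseIntegral

variable {E : Type*} [NormedAddCommGroup E] [NormedSpace ℝ E] {μ : Measure ℝ}
  {f g₁ g₂ g₃ : ℝ → E} {a b c : ℝ}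

theorem integral_Ioi_eq_of_eqOn_Ioc_Ioc_Ioi (hab : a ≤ b) (hbc : b ≤ c)
    (h₁ : Set.EqOn f g₁ (Set.Ioc a b)) (h₂ : Set.EqOn f g₂ (Set.Ioc b c))
    (h₃ : Set.EqOn f g₃ (Set.Ioi c)) (hg₁ : IntervalIntegrable g₁ μ a b)
    (hg₂ : IntervalIntegrable g₂ μ b c) (hg₃ : IntegrableOn g₃ (Set.Ioi c) μ) :
    ∫ x in Set.Ioi a, f x ∂μ
      = (∫ x in a..b, g₁ x ∂μ) + (∫ x in b..c, g₂ x ∂μ) + ∫ x in Set.Ioi c, g₃ x ∂μ := by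
  rw [← Set.uIoc_of_le hab] at h₁
  rw [← Set.uIoc_of_le hbc] at h₂
  have hf₁ : IntervalIntegrable f μ a b := (intervalIntegrable_congr h₁).2 hg₁
  have hf₂ : IntervalIntegrable f μ b c := (intervalIntegrable_congr h₂).2 hg₂
  have hf₃ : IntegrableOn f (Set.Ioi c) μ := hg₃.congr_fun h₃.symm measurableSet_Ioi
  rw [← intervalIntegral.integral_interval_add_Ioi' (hf₁.trans hf₂) hf₃,
    ← intervalIntegral.integral_add_adjacent_intervals hf₁ hf₂,
    intervalIntegral.integral_congr_ae (ae_of_all _ h₁),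
    intervalIntegral.integral_congr_ae (ae_of_all _ h₂), setIntegral_congr_fun measurableSet_Ioi h₃]

end PiecewiseIntegral

theorem integral_mul_sinh (a b : ℝ) :
    ∫ x in a..b, x * sinh x = (b * cosh b - sinh b) - (a * cosh a - sinh a) := by
  refine intervalIntegral.integral_eq_sub_of_hasDerivAt (f := fun x => x * cosh x - sinh x)
    (fun x _ => ?_) ((by fun_prop : Continuous fun x => x * sinh x).intervalIntegrable a b)
  refine (((hasDerivAt_id x).mul (hasDerivAt_cosh x)).sub (hasDerivAt_sinh x)).congr_deriv ?_
  simp only [id_eq]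
  ring

theorem integral_sinh (a b : ℝ) : ∫ x in a..b, sinh x = cosh b - cosh a :=
  intervalIntegral.integral_eq_sub_of_hasDerivAt (fun x _ => hasDerivAt_cosh x)
    (continuous_sinh.intervalIntegrable a b)

theorem tendsto_sinh_atTop : Tendsto sinh atTop atTop :=
  tendsto_atTop_mono' atTop ((eventually_ge_atTop 0).mono fun _ => self_le_sinh_iff.2) tendsto_id

namespace Fxi

def radical (ξ t : ℝ) : ℝ := √(sinh t ^ 2 - ξ ^ 2)

def logTerm (ξ t : ℝ) : ℝ := log (cosh t + radical ξ t)

def logTermPrimitive (ξ t : ℝ) : ℝ := logTerm ξ t * cosh t - radical ξ t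

variable {ξ t : ℝ}

theorem radical_nonneg (ξ t : ℝ) : 0 ≤ radical ξ t := sqrt_nonneg _

theorem cosh_add_radical_pos (ξ t : ℝ) : 0 < cosh t + radical ξ t :=
  add_pos_of_pos_of_nonneg (cosh_pos t) (radical_nonneg ξ t)

theorem radical_sq (h : ξ ^ 2 ≤ sinh t ^ 2) : radical ξ t ^ 2 = sinh t ^ 2 - ξ ^ 2 :=
  sq_sqrt (sub_nonneg.2 h)

theorem radical_le_sinh (ht : 0 ≤ t) : radical ξ t ≤ sinh t := by
  refine sqrt_le_iff.2 ⟨sinh_nonneg_iff.2 ht, ?_⟩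
  nlinarith

theorem continuous_radical (ξ : ℝ) : Continuous (radical ξ) := by
  unfold radical; fun_prop

@[fun_prop]
theorem continuous_logTerm (ξ : ℝ) : Continuous (logTerm ξ) :=
  (continuous_cosh.add (continuous_radical ξ)).log fun t => (cosh_add_radical_pos ξ t).ne'

theorem continuous_logTermPrimitive (ξ : ℝ) : Continuous (logTermPrimitive ξ) :=
  ((continuous_logTerm ξ).mul continuous_cosh).sub (continuous_radical ξ)

theorem hasDerivAt_radical (h : ξ ^ 2 < sinh t ^ 2) :
    HasDerivAt (radical ξ) (sinh t * cosh t / radical ξ t) t := by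
  refine ((((hasDerivAt_sinh t).pow 2).sub_const (ξ ^ 2)).sqrt (sub_pos.2 h).ne').congr_deriv ?_
  simp only [radical, Pi.pow_apply]
  field_simp
  ring

theorem hasDerivAt_logTermPrimitive (h : ξ ^ 2 < sinh t ^ 2) :
    HasDerivAt (logTermPrimitive ξ) (logTerm ξ t * sinh t) t := by
  have hR : radical ξ t ≠ 0 := (sqrt_pos.2 (sub_pos.2 h)).ne'
  have hG : HasDerivAt (logTerm ξ) (sinh t / radical ξ t) t := by
    refine (((hasDerivAt_cosh t).add (hasDerivAt_radical h)).log
      (cosh_add_radical_pos ξ t).ne').congr_deriv ?_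
    simp only [Pi.add_apply]
    field_simp [(cosh_add_radical_pos ξ t).ne']
    ring
  refine ((hG.mul (hasDerivAt_cosh t)).sub (hasDerivAt_radical h)).congr_deriv ?_
  field_simp
  ring

theorem sq_lt_sinh_sq_of_lt {a : ℝ} (hξ : 0 ≤ ξ) (ha : ξ ≤ sinh a) (ht : a < t) :
    ξ ^ 2 < sinh t ^ 2 :=
  pow_lt_pow_left₀ (ha.trans_lt (sinh_lt_sinh.2 ht)) hξ two_ne_zero

theorem integral_logTerm_mul_sinh {a b : ℝ} (hξ : 0 ≤ ξ) (ha : ξ ≤ sinh a) (hab : a ≤ b) :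
    ∫ x in a..b, logTerm ξ x * sinh x = logTermPrimitive ξ b - logTermPrimitive ξ a := by
  refine intervalIntegral.integral_eq_sub_of_hasDeriv_right_of_le hab
    (continuous_logTermPrimitive ξ).continuousOn (fun x hx => ?_)
    (((continuous_logTerm ξ).mul continuous_sinh).intervalIntegrable a b)
  exact (hasDerivAt_logTermPrimitive (sq_lt_sinh_sq_of_lt hξ ha hx.1)).hasDerivWithinAt

theorem logTerm_le (ht : 0 ≤ t) : logTerm ξ t ≤ t := by
  rw [logTerm, log_le_iff_le_exp (cosh_add_radical_pos ξ t), ← cosh_add_sinh]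
  linarith [radical_le_sinh (ξ := ξ) ht]

theorem sinh_sub_radical_le (hξ : 0 ≤ ξ) (h : ξ < sinh t) :
    sinh t - radical ξ t ≤ ξ ^ 2 / sinh t := by
  have hs : 0 < sinh t := hξ.trans_lt h
  have hR := radical_sq (ξ := ξ) (t := t) (pow_le_pow_left₀ hξ h.le 2)
  rw [le_div_iff₀ hs]
  nlinarith [radical_nonneg ξ t]

theorem sub_logTerm_mul_cosh_le (hξ : 0 ≤ ξ) (h : ξ ≤ sinh t) :
    (t - logTerm ξ t) * cosh t ≤ sinh t - radical ξ t := by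
  have ht : 0 ≤ t := sinh_nonneg_iff.1 (hξ.trans h)
  have hpos := cosh_add_radical_pos ξ t
  -- `exp (t - G) = exp t / (cosh t + R)`, and `x + 1 ≤ exp x`
  have hexp := add_one_le_exp (t - logTerm ξ t)
  rw [exp_sub, show exp (logTerm ξ t) = cosh t + radical ξ t from exp_log hpos,
    ← cosh_add_sinh, le_div_iff₀ hpos] at hexp
  nlinarith [logTerm_le (ξ := ξ) ht, radical_nonneg ξ t]

def tailPrimitive (ξ t : ℝ) : ℝ := t * cosh t - sinh t - logTermPrimitive ξ t

theorem continuous_tailPrimitive (ξ : ℝ) : Continuous (tailPrimitive ξ) :=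
  ((continuous_id.mul continuous_cosh).sub continuous_sinh).sub (continuous_logTermPrimitive ξ)

theorem hasDerivAt_tailPrimitive (h : ξ ^ 2 < sinh t ^ 2) :
    HasDerivAt (tailPrimitive ξ) ((t - logTerm ξ t) * sinh t) t := by
  refine ((((hasDerivAt_id t).mul (hasDerivAt_cosh t)).sub (hasDerivAt_sinh t)).sub
    (hasDerivAt_logTermPrimitive h)).congr_deriv ?_
  simp only [id_eq]
  ring

theorem tailPrimitive_mem_Icc (hξ : 0 ≤ ξ) (h : ξ < sinh t) :
    tailPrimitive ξ t ∈ Set.Icc (-(ξ ^ 2 / sinh t)) 0 := by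
  have hval : tailPrimitive ξ t = (t - logTerm ξ t) * cosh t - (sinh t - radical ξ t) := by
    rw [tailPrimitive, logTermPrimitive]
    ring
  have hlog : 0 ≤ (t - logTerm ξ t) * cosh t :=
    mul_nonneg (sub_nonneg.2 (logTerm_le (sinh_nonneg_iff.1 (hξ.trans h.le))))
      (cosh_pos t).le
  rw [hval]
  constructor
  · linarith [sinh_sub_radical_le hξ h]
  · linarith [sub_logTerm_mul_cosh_le hξ h.le]

theorem tendsto_tailPrimitive_atTop (hξ : 0 ≤ ξ) :
    Tendsto (tailPrimitive ξ) atTop (𝓝 0) := by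
  have hlow : Tendsto (fun t => -(ξ ^ 2 / sinh t)) atTop (𝓝 0) := by
    simpa using (tendsto_const_nhds.div_atTop tendsto_sinh_atTop).neg
  have hmem : ∀ᶠ t in atTop, tailPrimitive ξ t ∈ Set.Icc (-(ξ ^ 2 / sinh t)) 0 :=
    (tendsto_sinh_atTop.eventually_gt_atTop ξ).mono fun t => tailPrimitive_mem_Icc hξ
  exact tendsto_of_tendsto_of_tendsto_of_le_of_le' hlow tendsto_const_nhds
    (hmem.mono fun _ h => h.1) (hmem.mono fun _ h => h.2)

theorem sub_logTerm_mul_sinh_nonneg (ht : 0 ≤ t) : 0 ≤ (t - logTerm ξ t) * sinh t :=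
  mul_nonneg (sub_nonneg.2 (logTerm_le ht)) (sinh_nonneg_iff.2 ht)

theorem integrableOn_Ioi_sub_logTerm_mul_sinh {a : ℝ} (hξ : 0 ≤ ξ) (ha : ξ ≤ sinh a) :
    IntegrableOn (fun x => (x - logTerm ξ x) * sinh x) (Set.Ioi a) :=
  integrableOn_Ioi_deriv_of_nonneg (continuous_tailPrimitive ξ).continuousWithinAt
    (fun _ hx => hasDerivAt_tailPrimitive (sq_lt_sinh_sq_of_lt hξ ha hx))
    (fun _ hx => sub_logTerm_mul_sinh_nonneg ((sinh_nonneg_iff.1 (hξ.trans ha)).trans hx.le))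
    (tendsto_tailPrimitive_atTop hξ)

theorem integral_Ioi_sub_logTerm_mul_sinh {a : ℝ} (hξ : 0 ≤ ξ) (ha : ξ ≤ sinh a) :
    ∫ x in Set.Ioi a, (x - logTerm ξ x) * sinh x = -tailPrimitive ξ a := by
  rw [integral_Ioi_of_hasDerivAt_of_tendsto (continuous_tailPrimitive ξ).continuousWithinAt
    (fun _ hx => hasDerivAt_tailPrimitive (sq_lt_sinh_sq_of_lt hξ ha hx))
    (integrableOn_Ioi_sub_logTerm_mul_sinh hξ ha) (tendsto_tailPrimitive_atTop hξ), zero_sub]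

theorem sinh_le_iff_le_arsinh : sinh t ≤ ξ ↔ t ≤ arsinh ξ := by
  rw [← arsinh_le_arsinh, arsinh_sinh]

theorem two_mul_sinh_half_le_iff : 2 * sinh (t / 2) ≤ ξ ↔ t ≤ 2 * arsinh (ξ / 2) := by
  rw [← le_div_iff₀' two_pos, sinh_le_iff_le_arsinh, div_le_iff₀' two_pos]

theorem cosh_two_mul_arsinh_half (ξ : ℝ) : cosh (2 * arsinh (ξ / 2)) = 1 + ξ ^ 2 / 2 := by
  rw [cosh_two_mul, cosh_sq', sinh_arsinh]
  ring

theorem sinh_two_mul_arsinh_half_sq (ξ : ℝ) :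
    sinh (2 * arsinh (ξ / 2)) ^ 2 = ξ ^ 2 + ξ ^ 4 / 4 := by
  rw [sinh_sq, cosh_two_mul_arsinh_half]
  ring

theorem le_sinh_two_mul_arsinh_half (hξ : 0 ≤ ξ) : ξ ≤ sinh (2 * arsinh (ξ / 2)) := by
  have hs : 0 ≤ sinh (2 * arsinh (ξ / 2)) :=
    sinh_nonneg_iff.2 (mul_nonneg zero_le_two (arsinh_nonneg_iff.2 (by positivity)))
  nlinarith [sinh_two_mul_arsinh_half_sq ξ]

theorem arsinh_le_two_mul_arsinh_half (hξ : 0 ≤ ξ) : arsinh ξ ≤ 2 * arsinh (ξ / 2) := by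
  rw [← sinh_le_sinh, sinh_arsinh]
  exact le_sinh_two_mul_arsinh_half hξ

theorem radical_arsinh (ξ : ℝ) : radical ξ (arsinh ξ) = 0 := by
  simp [radical, sinh_arsinh]

theorem logTerm_arsinh (ξ : ℝ) : logTerm ξ (arsinh ξ) = log (1 + ξ ^ 2) / 2 := by
  rw [logTerm, radical_arsinh, add_zero, cosh_arsinh, log_sqrt (by positivity)]

theorem radical_two_mul_arsinh_half (ξ : ℝ) : radical ξ (2 * arsinh (ξ / 2)) = ξ ^ 2 / 2 := by
  rw [radical, sinh_two_mul_arsinh_half_sq, show ξ ^ 2 + ξ ^ 4 / 4 - ξ ^ 2 = (ξ ^ 2 / 2) ^ 2 by ring,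
    sqrt_sq (by positivity)]

theorem logTerm_two_mul_arsinh_half (ξ : ℝ) :
    logTerm ξ (2 * arsinh (ξ / 2)) = log (1 + ξ ^ 2) := by
  rw [logTerm, radical_two_mul_arsinh_half, cosh_two_mul_arsinh_half]
  ring_nf

theorem fxi_of_le_arsinh (h : t ≤ arsinh ξ) : fxi ξ t = 2 / ξ ^ 2 * t :=
  if_pos (sinh_le_iff_le_arsinh.2 h)

theorem fxi_of_arsinh_lt_of_le (h₁ : arsinh ξ < t) (h₂ : t ≤ 2 * arsinh (ξ / 2)) :
    fxi ξ t = 2 / ξ ^ 2 * (t + log (1 + ξ ^ 2) - 2 * logTerm ξ t) := by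
  rw [fxi, if_neg (sinh_le_iff_le_arsinh.not.2 h₁.not_ge),
    if_pos (two_mul_sinh_half_le_iff.2 h₂), logTerm, radical]

theorem fxi_of_two_mul_arsinh_half_lt (h₁ : arsinh ξ < t) (h₂ : 2 * arsinh (ξ / 2) < t) :
    fxi ξ t = 2 / ξ ^ 2 * (t - logTerm ξ t) := by
  rw [fxi, if_neg (sinh_le_iff_le_arsinh.not.2 h₁.not_ge),
    if_neg (two_mul_sinh_half_le_iff.not.2 h₂.not_ge), logTerm, radical]

theorem integral_fxi_mul_sinh (hξ : 0 < ξ) : ∫ t in Set.Ioi 0, fxi ξ t * sinh t = 1 := by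
  set t₁ := arsinh ξ
  set t₂ := 2 * arsinh (ξ / 2)
  set L := log (1 + ξ ^ 2)
  have h₀₁ : 0 ≤ t₁ := arsinh_nonneg_iff.2 hξ.le
  have h₁₂ : t₁ ≤ t₂ := arsinh_le_two_mul_arsinh_half hξ.le
  rw [integral_Ioi_eq_of_eqOn_Ioc_Ioc_Ioi h₀₁ h₁₂
    (g₁ := fun t => 2 / ξ ^ 2 * (t * sinh t))
    (g₂ := fun t => 2 / ξ ^ 2 * (t * sinh t + L * sinh t - 2 * (logTerm ξ t * sinh t)))
    (g₃ := fun t => 2 / ξ ^ 2 * ((t - logTerm ξ t) * sinh t))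
    (fun t ht => by simp only [fxi_of_le_arsinh ht.2]; ring)
    (fun t ht => by simp only [fxi_of_arsinh_lt_of_le ht.1 ht.2]; ring)
    (fun t ht => by
      simp only [fxi_of_two_mul_arsinh_half_lt (h₁₂.trans_lt ht) ht]; ring)
    (by apply Continuous.intervalIntegrable; fun_prop)
    (by apply Continuous.intervalIntegrable; fun_prop)
    ((integrableOn_Ioi_sub_logTerm_mul_sinh hξ.le (le_sinh_two_mul_arsinh_half hξ.le)).const_mul _)]
  have hG : IntervalIntegrable (fun t => logTerm ξ t * sinh t) volume t₁ t₂ := by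
    apply Continuous.intervalIntegrable; fun_prop
  rw [intervalIntegral.integral_const_mul, intervalIntegral.integral_const_mul, integral_const_mul,
    intervalIntegral.integral_sub (by apply Continuous.intervalIntegrable; fun_prop) (hG.const_mul 2),
    intervalIntegral.integral_add (by apply Continuous.intervalIntegrable; fun_prop)
      (by apply Continuous.intervalIntegrable; fun_prop),
    intervalIntegral.integral_const_mul, intervalIntegral.integral_const_mul, integral_mul_sinh,
    integral_mul_sinh, integral_sinh, integral_logTerm_mul_sinh hξ.le (sinh_arsinh ξ).ge h₁₂,
    integral_Ioi_sub_logTerm_mul_sinh hξ.le (le_sinh_two_mul_arsinh_half hξ.le)]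
  simp only [tailPrimitive, logTermPrimitive, t₁, t₂, L, logTerm_arsinh, radical_arsinh,
    logTerm_two_mul_arsinh_half, radical_two_mul_arsinh_half, cosh_two_mul_arsinh_half, sinh_zero]
  field_simp
  ring

end Fxi

/-- Lemma 2.8, (2.17): `∫₀^∞ f_ξ(t) sinh t dt = 1 + O(1/ξ²)`. -/
theorem fxi_integral_asymptotic :
    ∃ C > (0:ℝ), ∃ ξ₀ : ℝ, 1 ≤ ξ₀ ∧ ∀ ξ : ℝ, ξ₀ ≤ ξ →
      |(∫ t in Set.Ioi (0:ℝ), fxi ξ t * Real.sinh t) - 1| ≤ C / ξ ^ 2 := by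
  refine ⟨1, one_pos, 1, le_rfl, fun ξ hξ => ?_⟩
  rw [Fxi.integral_fxi_mul_sinh (one_pos.trans_le hξ), sub_self, abs_zero]
  positivity
end
end

section
/- For every α ∈ (0,1) there is a constant C = C(α) > 0 such that for all ξ ≥ 1: ∫₀^∞ f_ξ(t)·sinh(t)·(2·cosh t)^{−α/2} dt ≤ C·ξ^{−α}. -/
/-! On `t > 0` the integrand is bounded by an explicit integrable majorant. Write `A = cosh t`,
`B = sinh t`. Where `B ≤ ξ`, `f_ξ(t) = 2t/ξ²` and `t B (2A)^{-α/2} ≤ ξ t e^{-αt/2} ≪_α ξ e^{-αt/4}`.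
Where `B > ξ`, `log x ≤ x - 1` gives `t - log (A + √(B² - ξ²)) ≤ ξ²/(AB)`, and `e^t ≤ 2A` gives
`f_ξ(t) ≤ 2/(AB) + (2/ξ²) (log (4ξ²) - t)₊` in both remaining branches. Since `ξ ≤ 2A`, the first
term contributes `≤ 4 ξ^{-α} e^{-(1-α/2)t}`; the second lives on `t ≤ log (4ξ²)`, where
`B (2A)^{-α/2} ≤ e^{(1-α/2)t}/2`, so it integrates to `≪_α (4ξ²)^{1-α/2}/ξ² ≤ 4 ξ^{-α}`. -/

open Matrix MeasureTheory Real Filter Topology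
open scoped MatrixGroups Pointwise

noncomputable section

open Set

lemma self_le_exp_mul_div {c : ℝ} (hc : 0 < c) (x : ℝ) : x ≤ exp (c * x) / c := by
  rw [le_div_iff₀ hc, mul_comm]
  linarith [add_one_le_exp (c * x)]

lemma exp_le_two_mul_cosh (t : ℝ) : exp t ≤ 2 * cosh t := by
  rw [cosh_eq]; linarith [exp_pos (-t)]

lemma sinh_le_exp_div_two (t : ℝ) : sinh t ≤ exp t / 2 := by
  rw [sinh_eq]; linarith [exp_pos (-t)]

lemma rpow_two_mul_cosh_neg_le {s : ℝ} (hs : 0 ≤ s) (t : ℝ) :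
    (2 * cosh t) ^ (-s) ≤ exp (-s * t) := by
  calc (2 * cosh t) ^ (-s) ≤ exp t ^ (-s) :=
        rpow_le_rpow_of_nonpos (exp_pos t) (exp_le_two_mul_cosh t) (neg_nonpos.2 hs)
    _ = exp (-s * t) := by rw [← exp_mul, mul_comm]

lemma le_log_two_mul_cosh_add {x : ℝ} (hx : 0 ≤ x) (t : ℝ) : t ≤ log (2 * (cosh t + x)) := by
  calc t = log (exp t) := (log_exp t).symm
    _ ≤ log (2 * (cosh t + x)) :=
        log_le_log (exp_pos t) (by linarith [exp_le_two_mul_cosh t])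

lemma sub_log_cosh_add_sqrt_le {ξ t : ℝ} (hξ : 0 ≤ ξ) (h : ξ < sinh t) :
    t - log (cosh t + √(sinh t ^ 2 - ξ ^ 2)) ≤ ξ ^ 2 / (cosh t * sinh t) := by
  set A := cosh t
  set B := sinh t
  set S := √(B ^ 2 - ξ ^ 2)
  have hB : 0 < B := hξ.trans_lt h
  have hA : 0 < A := cosh_pos t
  have hS : 0 ≤ S := sqrt_nonneg _
  have hS2 : S ^ 2 = B ^ 2 - ξ ^ 2 := sq_sqrt (by nlinarith)
  have hAS : 0 < A + S := by positivity
  calc t - log (A + S) = log ((A + B) / (A + S)) := by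
        rw [log_div (by positivity) hAS.ne', cosh_add_sinh, log_exp]
    _ ≤ (A + B) / (A + S) - 1 := log_le_sub_one_of_pos (by positivity)
    _ = ξ ^ 2 / ((A + S) * (B + S)) := by
        rw [div_sub_one hAS.ne', div_eq_div_iff hAS.ne' (by positivity)]
        linear_combination (-(A + S)) * hS2
    _ ≤ ξ ^ 2 / (A * B) := by
        gcongr <;> linarith

lemma sinh_mul_rpow_two_mul_cosh_neg_le {s : ℝ} (hs : 0 ≤ s) (t : ℝ) :
    sinh t * (2 * cosh t) ^ (-s) ≤ exp ((1 - s) * t) / 2 := by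
  calc sinh t * (2 * cosh t) ^ (-s) ≤ exp t / 2 * exp (-s * t) := by
        gcongr
        · exact sinh_le_exp_div_two t
        · exact rpow_two_mul_cosh_neg_le hs t
    _ = exp ((1 - s) * t) / 2 := by rw [div_mul_eq_mul_div, ← exp_add]; ring_nf

lemma rpow_four_mul_sq_div_sq_le {α ξ : ℝ} (hα : 0 ≤ α) (hξ : 0 < ξ) :
    (4 * ξ ^ 2) ^ (1 - α / 2) / ξ ^ 2 ≤ 4 * ξ ^ (-α) := by
  have hsq : (ξ ^ 2) ^ (1 - α / 2) = ξ ^ 2 * ξ ^ (-α) := by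
    rw [← rpow_two, ← rpow_mul hξ.le, show 2 * (1 - α / 2) = 2 + -α by ring, rpow_add hξ,
      rpow_two]
  have h4 : (4 : ℝ) ^ (1 - α / 2) ≤ 4 := by
    simpa using
      rpow_le_rpow_of_exponent_le (by norm_num : (1 : ℝ) ≤ 4) (by linarith : 1 - α / 2 ≤ 1)
  rw [mul_rpow (by norm_num) (by positivity), hsq, mul_div_assoc,
    mul_div_cancel_left₀ _ (by positivity)]
  gcongr

lemma fxi_le_of_lt_sinh {ξ t : ℝ} (hξ : 1 ≤ ξ) (h : ξ < sinh t) :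
    fxi ξ t ≤ 2 / (cosh t * sinh t) + 2 / ξ ^ 2 * max 0 (log (4 * ξ ^ 2) - t) := by
  have hξ0 : 0 < ξ := by linarith
  set Q := log (cosh t + √(sinh t ^ 2 - ξ ^ 2))
  have htail : t - Q ≤ ξ ^ 2 / (cosh t * sinh t) := sub_log_cosh_add_sqrt_le hξ0.le h
  have hfirst : 2 / ξ ^ 2 * (ξ ^ 2 / (cosh t * sinh t)) = 2 / (cosh t * sinh t) := by
    field_simp
  have hmax : 0 ≤ 2 / ξ ^ 2 * max 0 (log (4 * ξ ^ 2) - t) := by positivity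
  rw [fxi, if_neg h.not_ge]
  split_ifs
  · have hmid : log (1 + ξ ^ 2) - Q ≤ log (4 * ξ ^ 2) - t := by
      have hQ := le_log_two_mul_cosh_add (sqrt_nonneg (sinh t ^ 2 - ξ ^ 2)) t
      have hξ2 : log (1 + ξ ^ 2) ≤ log (2 * ξ ^ 2) := log_le_log (by positivity) (by nlinarith)
      rw [log_mul two_ne_zero (by positivity)] at hQ
      rw [show (4 : ℝ) * ξ ^ 2 = 2 * (2 * ξ ^ 2) by ring, log_mul two_ne_zero (by positivity)]
      linarith
    calc 2 / ξ ^ 2 * (t + log (1 + ξ ^ 2) - 2 * Q)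
        = 2 / ξ ^ 2 * ((t - Q) + (log (1 + ξ ^ 2) - Q)) := by ring
      _ ≤ 2 / ξ ^ 2 * (ξ ^ 2 / (cosh t * sinh t) + max 0 (log (4 * ξ ^ 2) - t)) := by
        gcongr
        exact hmid.trans (le_max_right _ _)
      _ = _ := by rw [mul_add, hfirst]
  · calc 2 / ξ ^ 2 * (t - Q) ≤ 2 / ξ ^ 2 * (ξ ^ 2 / (cosh t * sinh t)) := by gcongr
      _ ≤ _ := by rw [hfirst]; linarith

lemma fxi_mul_sinh_mul_rpow_le_of_sinh_le {α ξ t : ℝ} (hα : 0 < α) (hξ : 0 < ξ) (ht : 0 ≤ t)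
    (h : sinh t ≤ ξ) :
    fxi ξ t * sinh t * (2 * cosh t) ^ (-(α / 2)) ≤ 8 / (α * ξ) * exp (-(α / 4) * t) := by
  rw [fxi, if_pos h]
  calc 2 / ξ ^ 2 * t * sinh t * (2 * cosh t) ^ (-(α / 2))
      ≤ 2 / ξ ^ 2 * t * ξ * exp (-(α / 2) * t) := by
        gcongr
        exact rpow_two_mul_cosh_neg_le (by positivity) t
    _ ≤ 2 / ξ ^ 2 * (exp (α / 4 * t) / (α / 4)) * ξ * exp (-(α / 2) * t) := by
        gcongr
        exact self_le_exp_mul_div (by positivity) t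
    _ = 8 / (α * ξ) * (exp (α / 4 * t) * exp (-(α / 2) * t)) := by
        field_simp
        norm_num
    _ = 8 / (α * ξ) * exp (-(α / 4) * t) := by rw [← exp_add]; ring_nf

lemma two_div_cosh_mul_rpow_le {α ξ t : ℝ} (hα0 : 0 ≤ α) (hα2 : α ≤ 2) (hξ : 0 < ξ)
    (h : ξ ≤ 2 * cosh t) :
    2 / cosh t * (2 * cosh t) ^ (-(α / 2)) ≤ 4 * ξ ^ (-α) * exp (-(1 - α / 2) * t) := by
  have hc : 0 < 2 * cosh t := by positivity
  calc 2 / cosh t * (2 * cosh t) ^ (-(α / 2))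
      = 4 * ((2 * cosh t) ^ (-α) * (2 * cosh t) ^ (-(1 - α / 2))) := by
        rw [← rpow_add hc, show -α + -(1 - α / 2) = -1 + -(α / 2) by ring, rpow_add hc,
          rpow_neg_one]
        field_simp
        norm_num
    _ ≤ 4 * (ξ ^ (-α) * exp (-(1 - α / 2) * t)) := by
        gcongr 4 * (?_ * ?_)
        · exact rpow_le_rpow_of_nonpos hξ h (by linarith)
        · exact rpow_two_mul_cosh_neg_le (by linarith) t
    _ = 4 * ξ ^ (-α) * exp (-(1 - α / 2) * t) := by ring

lemma mul_max_sub_mul_sinh_mul_rpow_le {α ξ L t : ℝ} (hα0 : 0 ≤ α) (hα2 : α < 2) (hξ : 0 < ξ) :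
    2 / ξ ^ 2 * max 0 (L - t) * sinh t * (2 * cosh t) ^ (-(α / 2)) ≤
      2 / ((1 - α / 2) * ξ ^ 2) * exp ((1 - α / 2) / 2 * L)
        * (Iic L).indicator (fun s ↦ exp ((1 - α / 2) / 2 * s)) t := by
  by_cases ht : t ≤ L
  · have hβ : 0 < (1 - α / 2) / 2 := by linarith
    rw [indicator_of_mem (show t ∈ Iic L from ht), max_eq_right (sub_nonneg.2 ht),
      mul_assoc _ (sinh t)]
    calc 2 / ξ ^ 2 * (L - t) * (sinh t * (2 * cosh t) ^ (-(α / 2)))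
        ≤ 2 / ξ ^ 2 * (L - t) * (exp ((1 - α / 2) * t) / 2) := by
          gcongr
          exact sinh_mul_rpow_two_mul_cosh_neg_le (by positivity) t
      _ ≤ 2 / ξ ^ 2 * (exp ((1 - α / 2) / 2 * (L - t)) / ((1 - α / 2) / 2))
          * (exp ((1 - α / 2) * t) / 2) := by
          gcongr
          exact self_le_exp_mul_div hβ _
      _ = 2 / ((1 - α / 2) * ξ ^ 2)
          * (exp ((1 - α / 2) / 2 * (L - t)) * exp ((1 - α / 2) * t)) := by
          field_simp
      _ = _ := by rw [← exp_add, mul_assoc, ← exp_add]; ring_nf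
  · rw [indicator_of_notMem (show t ∉ Iic L from ht), max_eq_left (by linarith)]
    simp

def fxiMajorant (α ξ t : ℝ) : ℝ :=
  8 / (α * ξ) * exp (-(α / 4) * t) + 4 * ξ ^ (-α) * exp (-(1 - α / 2) * t)
    + 2 / ((1 - α / 2) * ξ ^ 2) * exp ((1 - α / 2) / 2 * log (4 * ξ ^ 2))
      * (Iic (log (4 * ξ ^ 2))).indicator (fun s ↦ exp ((1 - α / 2) / 2 * s)) t

lemma fxi_mul_sinh_mul_rpow_le_fxiMajorant {α ξ t : ℝ} (hα0 : 0 < α) (hα2 : α < 2) (hξ : 1 ≤ ξ)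
    (ht : 0 < t) :
    fxi ξ t * sinh t * (2 * cosh t) ^ (-(α / 2)) ≤ fxiMajorant α ξ t := by
  have hξ0 : 0 < ξ := by linarith
  have hβ : 0 < 1 - α / 2 := by linarith
  have h₁ : 0 ≤ 8 / (α * ξ) * exp (-(α / 4) * t) := by positivity
  have h₂ : 0 ≤ 4 * ξ ^ (-α) * exp (-(1 - α / 2) * t) := by positivity
  have h₃ : 0 ≤ 2 / ((1 - α / 2) * ξ ^ 2) * exp ((1 - α / 2) / 2 * log (4 * ξ ^ 2))
      * (Iic (log (4 * ξ ^ 2))).indicator (fun s ↦ exp ((1 - α / 2) / 2 * s)) t :=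
    mul_nonneg (by positivity) (indicator_nonneg (fun _ _ ↦ (exp_pos _).le) t)
  rw [fxiMajorant]
  rcases le_or_gt (sinh t) ξ with h | h
  · linarith [fxi_mul_sinh_mul_rpow_le_of_sinh_le hα0 hξ0 ht.le h]
  · have hsinh : 0 < sinh t := hξ0.trans h
    have hξc : ξ ≤ 2 * cosh t := by linarith [sinh_lt_cosh t, cosh_pos t]
    calc fxi ξ t * sinh t * (2 * cosh t) ^ (-(α / 2))
        ≤ (2 / (cosh t * sinh t) + 2 / ξ ^ 2 * max 0 (log (4 * ξ ^ 2) - t)) * sinh t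
          * (2 * cosh t) ^ (-(α / 2)) := by
          gcongr
          exact fxi_le_of_lt_sinh hξ h
      _ = 2 / cosh t * (2 * cosh t) ^ (-(α / 2))
          + 2 / ξ ^ 2 * max 0 (log (4 * ξ ^ 2) - t) * sinh t * (2 * cosh t) ^ (-(α / 2)) := by
          field_simp
      _ ≤ _ := by
          linarith [two_div_cosh_mul_rpow_le hα0.le hα2.le hξ0 hξc,
            mul_max_sub_mul_sinh_mul_rpow_le (L := log (4 * ξ ^ 2)) (t := t) hα0.le hα2 hξ0]

lemma integrableOn_fxiMajorant {α ξ : ℝ} (hα0 : 0 < α) (hα2 : α < 2) :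
    IntegrableOn (fxiMajorant α ξ) (Ioi 0) := by
  have hβ : 0 < (1 - α / 2) / 2 := by linarith
  exact (((integrableOn_exp_mul_Ioi (by linarith) 0).const_mul _).add
    ((integrableOn_exp_mul_Ioi (by linarith) 0).const_mul _)).add
    (((integrableOn_exp_mul_Iic hβ _).integrable_indicator
      measurableSet_Iic).integrableOn.const_mul _)

lemma setIntegral_indicator_Iic_exp_le {c : ℝ} (hc : 0 < c) (a L : ℝ) :
    ∫ t in Ioi a, (Iic L).indicator (fun s ↦ exp (c * s)) t ≤ exp (c * L) / c := by
  rw [setIntegral_indicator measurableSet_Iic, ← integral_exp_mul_Iic hc L]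
  exact setIntegral_mono_set (integrableOn_exp_mul_Iic hc L)
    (ae_of_all _ fun _ ↦ (exp_pos _).le) inter_subset_right.eventuallyLE

lemma integral_fxiMajorant_le {α ξ : ℝ} (hα0 : 0 < α) (hα1 : α ≤ 1) (hξ : 1 ≤ ξ) :
    ∫ t in Ioi 0, fxiMajorant α ξ t
      ≤ (32 / α ^ 2 + 4 / (1 - α / 2) + 16 / (1 - α / 2) ^ 2) * ξ ^ (-α) := by
  unfold fxiMajorant
  have hξ0 : 0 < ξ := by linarith
  have hβ : 0 < 1 - α / 2 := by linarith
  set L := log (4 * ξ ^ 2)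
  set K := 2 / ((1 - α / 2) * ξ ^ 2) * exp ((1 - α / 2) / 2 * L)
  have hi₁ := (integrableOn_exp_mul_Ioi (a := -(α / 4)) (by linarith) 0).const_mul (8 / (α * ξ))
  have hi₂ := (integrableOn_exp_mul_Ioi (a := -(1 - α / 2)) (by linarith) 0).const_mul
    (4 * ξ ^ (-α))
  have hi₃ := (((integrableOn_exp_mul_Iic (a := (1 - α / 2) / 2) (by positivity) L
    ).integrable_indicator measurableSet_Iic).integrableOn (s := Ioi 0)).const_mul K
  have hi₁₂ : IntegrableOn (fun t ↦ 8 / (α * ξ) * exp (-(α / 4) * t)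
      + 4 * ξ ^ (-α) * exp (-(1 - α / 2) * t)) (Ioi 0) := hi₁.add hi₂
  have h₁ : ∫ t in Ioi 0, 8 / (α * ξ) * exp (-(α / 4) * t) ≤ 32 / α ^ 2 * ξ ^ (-α) := by
    have hξα : ξ⁻¹ ≤ ξ ^ (-α) := by
      simpa [rpow_neg_one] using rpow_le_rpow_of_exponent_le hξ (by linarith : -1 ≤ -α)
    rw [integral_const_mul, integral_exp_mul_Ioi (by linarith)]
    calc 8 / (α * ξ) * (-exp (-(α / 4) * 0) / -(α / 4)) = 32 / α ^ 2 * ξ⁻¹ := by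
          simp only [mul_zero, exp_zero]
          field_simp
          ring
      _ ≤ 32 / α ^ 2 * ξ ^ (-α) := by gcongr
  have h₂ : ∫ t in Ioi 0, 4 * ξ ^ (-α) * exp (-(1 - α / 2) * t) = 4 / (1 - α / 2) * ξ ^ (-α) := by
    rw [integral_const_mul, integral_exp_mul_Ioi (by linarith)]
    simp only [mul_zero, exp_zero]
    field_simp
  have h₃ : ∫ t in Ioi 0, K * (Iic L).indicator (fun s ↦ exp ((1 - α / 2) / 2 * s)) t
      ≤ 16 / (1 - α / 2) ^ 2 * ξ ^ (-α) := by
    rw [integral_const_mul]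
    calc K * ∫ t in Ioi 0, (Iic L).indicator (fun s ↦ exp ((1 - α / 2) / 2 * s)) t
        ≤ K * (exp ((1 - α / 2) / 2 * L) / ((1 - α / 2) / 2)) := by
          gcongr
          exact setIntegral_indicator_Iic_exp_le (by positivity) 0 L
      _ = 4 / (1 - α / 2) ^ 2 * ((4 * ξ ^ 2) ^ (1 - α / 2) / ξ ^ 2) := by
          rw [rpow_def_of_pos (by positivity),
            show L * (1 - α / 2) = (1 - α / 2) / 2 * L + (1 - α / 2) / 2 * L by ring, exp_add]
          simp only [K]
          field_simp
          ring
      _ ≤ 4 / (1 - α / 2) ^ 2 * (4 * ξ ^ (-α)) := by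
          gcongr
          exact rpow_four_mul_sq_div_sq_le hα0.le hξ0
      _ = 16 / (1 - α / 2) ^ 2 * ξ ^ (-α) := by ring
  rw [integral_add hi₁₂ hi₃, integral_add hi₁ hi₂, h₂]
  linarith

/-- Lemma 2.8, (2.18): `∫₀^∞ f_ξ(t) sinh t (2 cosh t)^{−α/2} dt ≪_α ξ^{−α}`. -/
theorem fxi_weighted_integral_bound (α : ℝ) (hα0 : 0 < α) (hα1 : α < 1) :
    ∃ C > (0:ℝ), ∀ ξ : ℝ, 1 ≤ ξ →
      (∫ t in Set.Ioi (0:ℝ), fxi ξ t * Real.sinh t * (2 * Real.cosh t) ^ (-(α / 2)))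
        ≤ C * ξ ^ (-α) := by
  have hα2 : α < 2 := by linarith
  have hβ : 0 < 1 - α / 2 := by linarith
  refine ⟨32 / α ^ 2 + 4 / (1 - α / 2) + 16 / (1 - α / 2) ^ 2, by positivity, fun ξ hξ ↦ ?_⟩
  by_cases hF : IntegrableOn (fun t ↦ fxi ξ t * sinh t * (2 * cosh t) ^ (-(α / 2))) (Ioi 0)
  · calc ∫ t in Ioi 0, fxi ξ t * sinh t * (2 * cosh t) ^ (-(α / 2))
        ≤ ∫ t in Ioi 0, fxiMajorant α ξ t :=
          setIntegral_mono_on hF (integrableOn_fxiMajorant hα0 hα2) measurableSet_Ioi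
            fun _ ht ↦ fxi_mul_sinh_mul_rpow_le_fxiMajorant hα0 hα2 hξ ht
      _ ≤ _ := integral_fxiMajorant_le hα0 hα1.le hξ
  · rw [integral_undef hF]
    positivity
end
end

section
/- There is an absolute constant C > 0 with the following property. Let δ ∈ (0, 1], ξ > 1, and ℓ, ℓ′ > 0 with |ℓ − ℓ′| < δ, and set ℓ₁ := arcsinh(ξ), ℓ₂ := 2·arcsinh(ξ/2). Then: |f_ξ(ℓ) − f_ξ(ℓ′)| ≤ C·δ/ξ² if ℓ < ℓ₁ − δ; |f_ξ(ℓ) − f_ξ(ℓ′)| ≤ C·√δ/ξ² if ℓ₁ − δ ≤ ℓ ≤ ℓ₁ + 1; |f_ξ(ℓ) − f_ξ(ℓ′)| ≤ C·δ/ξ² if ℓ₁ + 1 ≤ ℓ ≤ ℓ₂ + 1; and |f_ξ(ℓ) − f_ξ(ℓ′)| ≤ C·δ/sinh²(ℓ) if ℓ ≥ ℓ₂ + 1. -/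
open Matrix MeasureTheory Real Filter Topology
open scoped MatrixGroups Pointwise

noncomputable section

set_option maxHeartbeats 1000000

/-- `P ξ u = cosh u + √(sinh² u − ξ²)`. -/
def Pf (ξ u : ℝ) : ℝ := Real.cosh u + Real.sqrt (Real.sinh u ^ 2 - ξ ^ 2)

def Gf (ξ u : ℝ) : ℝ := Real.log (Pf ξ u)

def Ff (ξ u : ℝ) : ℝ :=
  if Real.sinh u ≤ ξ then 0
  else if 2 * Real.sinh (u / 2) ≤ ξ then 2 * Gf ξ u - Real.log (1 + ξ ^ 2)
  else Gf ξ u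

lemma Pf_pos (ξ u : ℝ) : 0 < Pf ξ u :=
  add_pos_of_pos_of_nonneg (Real.cosh_pos u) (Real.sqrt_nonneg _)

lemma cosh_le_Pf (ξ u : ℝ) : Real.cosh u ≤ Pf ξ u :=
  le_add_of_nonneg_right (Real.sqrt_nonneg _)

lemma fxi_eq_s19 (ξ u : ℝ) : fxi ξ u = 2 / ξ ^ 2 * (u - Ff ξ u) := by
  unfold fxi Ff Gf Pf
  split_ifs <;> ring

lemma Gf_mono {ξ t s : ℝ} (ht : 0 ≤ t) (hts : t ≤ s) : Gf ξ t ≤ Gf ξ s := by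
  have hsinh : Real.sinh t ≤ Real.sinh s := Real.sinh_le_sinh.2 hts
  have hsinh0 : 0 ≤ Real.sinh t := by
    simpa using Real.sinh_le_sinh.2 ht
  apply Real.log_le_log (Pf_pos ξ t)
  unfold Pf
  gcongr
  · rw [Real.cosh_le_cosh, abs_of_nonneg ht, abs_of_nonneg (ht.trans hts)]
    exact hts

lemma sqrt_add_le {A e : ℝ} (hA : 0 ≤ A) (he : 0 ≤ e) :
    Real.sqrt (A + e) ≤ Real.sqrt A + Real.sqrt e := by
  rw [Real.sqrt_le_iff]
  constructor
  · positivity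
  · nlinarith [Real.sq_sqrt hA, Real.sq_sqrt he, Real.sqrt_nonneg A, Real.sqrt_nonneg e,
      mul_nonneg (Real.sqrt_nonneg A) (Real.sqrt_nonneg e)]

lemma sqrt_add_le2 {A e : ℝ} (hA : 0 < A) (he : 0 ≤ e) :
    Real.sqrt (A + e) ≤ Real.sqrt A + e / (2 * Real.sqrt A) := by
  have hs : 0 < Real.sqrt A := Real.sqrt_pos.2 hA
  rw [Real.sqrt_le_iff]
  constructor
  · positivity
  · have h1 : Real.sqrt A ^ 2 = A := Real.sq_sqrt hA.le
    have key : Real.sqrt A * (e / (2 * Real.sqrt A)) = e / 2 := by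
      field_simp
    nlinarith [sq_nonneg (e / (2 * Real.sqrt A))]

lemma cosh_le_exp_mul {t d : ℝ} (hd : 0 ≤ d) :
    Real.cosh (t + d) ≤ Real.exp d * Real.cosh t := by
  rw [Real.cosh_add]
  have h1 : Real.sinh t < Real.cosh t := Real.sinh_lt_cosh t
  have h2 : 0 ≤ Real.sinh d := by simpa using Real.sinh_le_sinh.2 hd
  have h3 := Real.cosh_add_sinh d
  nlinarith [Real.cosh_pos d, Real.cosh_pos t]

lemma sqrt_exp_mul (d Z : ℝ) :
    Real.sqrt (Real.exp (2 * d) * Z) = Real.exp d * Real.sqrt Z := by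
  rw [show Real.exp (2 * d) = Real.exp d ^ 2 by rw [two_mul, Real.exp_add]; ring,
    Real.sqrt_mul (sq_nonneg _), Real.sqrt_sq (Real.exp_pos d).le]

lemma exp_sub_one {d : ℝ} (hd : 0 ≤ d) :
    Real.exp (2 * d) - 1 ≤ 2 * d * Real.exp (2 * d) := by
  have h1 := Real.add_one_le_exp (-(2 * d))
  have h2 : Real.exp (-(2 * d)) * Real.exp (2 * d) = 1 := by
    rw [← Real.exp_add]; simp
  nlinarith [Real.exp_pos (2 * d)]

lemma sinh_sq_sub_le {ξ t s : ℝ} (ht : 0 ≤ t) (hts : t ≤ s) :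
    Real.sinh s ^ 2 - ξ ^ 2 ≤ Real.exp (2 * (s - t)) * (Real.sinh t ^ 2 - ξ ^ 2)
      + (Real.exp (2 * (s - t)) - 1) * (1 + ξ ^ 2) := by
  have hd : 0 ≤ s - t := by linarith
  have hcosh : Real.cosh s ≤ Real.exp (s - t) * Real.cosh t := by
    have := cosh_le_exp_mul (t := t) hd
    rwa [show t + (s - t) = s by ring] at this
  have h1 : Real.cosh s ^ 2 = Real.sinh s ^ 2 + 1 := Real.cosh_sq s
  have h2 : Real.cosh t ^ 2 = Real.sinh t ^ 2 + 1 := Real.cosh_sq t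
  have h3 : Real.exp (2 * (s - t)) = Real.exp (s - t) ^ 2 := by
    rw [two_mul, Real.exp_add]; ring
  nlinarith [Real.cosh_pos s, Real.cosh_pos t, Real.exp_pos (s - t)]

lemma sqrt_one_add_sq_le_cosh (ξ t : ℝ) (h : ξ ≤ Real.sinh t) (hξ : 0 ≤ ξ) :
    Real.sqrt (1 + ξ ^ 2) ≤ Real.cosh t := by
  rw [show Real.cosh t = Real.sqrt (Real.cosh t ^ 2) from (Real.sqrt_sq (Real.cosh_pos t).le).symm]
  apply Real.sqrt_le_sqrt
  rw [Real.cosh_sq]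
  nlinarith

lemma G_holder {ξ t s : ℝ} (hξ : 0 ≤ ξ) (hξt : ξ ≤ Real.sinh t) (ht : 0 ≤ t) (hts : t ≤ s) :
    Gf ξ s ≤ Gf ξ t + (s - t) + Real.sqrt (2 * (s - t)) := by
  set d := s - t with hdd
  have hd : 0 ≤ d := by rw [hdd]; linarith
  have hX : 0 ≤ Real.sinh t ^ 2 - ξ ^ 2 := by nlinarith
  have hY0 : (0:ℝ) ≤ (Real.exp (2 * d) - 1) * (1 + ξ ^ 2) := by
    have : (1:ℝ) ≤ Real.exp (2 * d) := Real.one_le_exp (by linarith)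
    nlinarith
  have hP : Pf ξ s ≤ Real.exp d * (Pf ξ t * (1 + Real.sqrt (2 * d))) := by
    have hs1 : Real.sqrt (Real.sinh s ^ 2 - ξ ^ 2)
        ≤ Real.exp d * Real.sqrt (Real.sinh t ^ 2 - ξ ^ 2)
          + Real.exp d * Real.sqrt (2 * d) * Real.cosh t := by
      calc Real.sqrt (Real.sinh s ^ 2 - ξ ^ 2)
          ≤ Real.sqrt (Real.exp (2 * d) * (Real.sinh t ^ 2 - ξ ^ 2)
              + (Real.exp (2 * d) - 1) * (1 + ξ ^ 2)) :=
            Real.sqrt_le_sqrt (sinh_sq_sub_le ht hts)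
        _ ≤ Real.sqrt (Real.exp (2 * d) * (Real.sinh t ^ 2 - ξ ^ 2))
              + Real.sqrt ((Real.exp (2 * d) - 1) * (1 + ξ ^ 2)) :=
            sqrt_add_le (by positivity) hY0
        _ ≤ Real.exp d * Real.sqrt (Real.sinh t ^ 2 - ξ ^ 2)
              + Real.exp d * Real.sqrt (2 * d) * Real.cosh t := by
            rw [sqrt_exp_mul]
            gcongr
            calc Real.sqrt ((Real.exp (2 * d) - 1) * (1 + ξ ^ 2))
                ≤ Real.sqrt (Real.exp (2 * d) * (2 * d * (1 + ξ ^ 2))) := by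
                  apply Real.sqrt_le_sqrt
                  nlinarith [exp_sub_one hd]
              _ = Real.exp d * Real.sqrt (2 * d * (1 + ξ ^ 2)) := sqrt_exp_mul _ _
              _ = Real.exp d * (Real.sqrt (2 * d) * Real.sqrt (1 + ξ ^ 2)) := by
                  rw [Real.sqrt_mul (by positivity : (0:ℝ) ≤ 2 * d)]
              _ ≤ Real.exp d * (Real.sqrt (2 * d) * Real.cosh t) := by
                  gcongr
                  exact sqrt_one_add_sq_le_cosh ξ t hξt hξ
              _ = Real.exp d * Real.sqrt (2 * d) * Real.cosh t := by ring
    have hct : Real.cosh t ≤ Pf ξ t := cosh_le_Pf ξ t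
    have hcs : Real.cosh s ≤ Real.exp d * Real.cosh t := by
      have := cosh_le_exp_mul (t := t) hd
      rwa [show t + d = s by rw [hdd]; ring] at this
    have hsq2 : 0 ≤ Real.sqrt (2 * d) := Real.sqrt_nonneg _
    have hep : 0 < Real.exp d := Real.exp_pos d
    unfold Pf at *
    nlinarith [Real.cosh_pos t, mul_nonneg (mul_nonneg hep.le
      (Real.sqrt_nonneg (Real.sinh t ^ 2 - ξ ^ 2))) hsq2,
      mul_nonneg (mul_nonneg hep.le (Real.cosh_pos t).le) hsq2]
  calc Gf ξ s ≤ Real.log (Real.exp d * (Pf ξ t * (1 + Real.sqrt (2 * d)))) :=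
        Real.log_le_log (Pf_pos ξ s) hP
    _ = d + (Gf ξ t + Real.log (1 + Real.sqrt (2 * d))) := by
        rw [Real.log_mul (Real.exp_pos d).ne' (mul_pos (Pf_pos ξ t) (by positivity)).ne', Real.log_exp,
          Real.log_mul (Pf_pos ξ t).ne' (by positivity)]
        rfl
    _ ≤ Gf ξ t + d + Real.sqrt (2 * d) := by
        have := Real.log_le_sub_one_of_pos (show (0:ℝ) < 1 + Real.sqrt (2 * d) by positivity)
        linarith

lemma G_core {ξ t s E : ℝ} (ht : 0 ≤ t) (hts : t ≤ s) (hE : 0 < E)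
    (hE2 : E ^ 2 ≤ Real.sinh t ^ 2 - ξ ^ 2) :
    Gf ξ s ≤ Gf ξ t + (s - t) + (1 + ξ ^ 2) * (s - t) / (E * Real.cosh t) := by
  set d := s - t with hdd
  have hd : 0 ≤ d := by rw [hdd]; linarith
  have hX : 0 < Real.sinh t ^ 2 - ξ ^ 2 := lt_of_lt_of_le (by positivity) hE2
  have hY0 : (0:ℝ) ≤ (Real.exp (2 * d) - 1) * (1 + ξ ^ 2) := by
    have : (1:ℝ) ≤ Real.exp (2 * d) := Real.one_le_exp (by linarith)
    nlinarith
  have hEle : E ≤ Real.sqrt (Real.sinh t ^ 2 - ξ ^ 2) := by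
    calc E = Real.sqrt (E ^ 2) := (Real.sqrt_sq hE.le).symm
      _ ≤ _ := Real.sqrt_le_sqrt hE2
  have hP : Pf ξ s ≤ Real.exp d * (Pf ξ t * (1 + (1 + ξ ^ 2) * d / (E * Real.cosh t))) := by
    have hs1 : Real.sqrt (Real.sinh s ^ 2 - ξ ^ 2)
        ≤ Real.exp d * Real.sqrt (Real.sinh t ^ 2 - ξ ^ 2)
          + Real.exp d * ((1 + ξ ^ 2) * d / E) := by
      have hA : 0 < Real.exp (2 * d) * (Real.sinh t ^ 2 - ξ ^ 2) := by positivity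
      calc Real.sqrt (Real.sinh s ^ 2 - ξ ^ 2)
          ≤ Real.sqrt (Real.exp (2 * d) * (Real.sinh t ^ 2 - ξ ^ 2)
              + (Real.exp (2 * d) - 1) * (1 + ξ ^ 2)) :=
            Real.sqrt_le_sqrt (sinh_sq_sub_le ht hts)
        _ ≤ Real.sqrt (Real.exp (2 * d) * (Real.sinh t ^ 2 - ξ ^ 2))
              + (Real.exp (2 * d) - 1) * (1 + ξ ^ 2)
                / (2 * Real.sqrt (Real.exp (2 * d) * (Real.sinh t ^ 2 - ξ ^ 2))) :=
            sqrt_add_le2 hA hY0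
        _ ≤ Real.exp d * Real.sqrt (Real.sinh t ^ 2 - ξ ^ 2)
              + Real.exp d * ((1 + ξ ^ 2) * d / E) := by
            rw [sqrt_exp_mul]
            gcongr ?_ + ?_
            · exact le_refl _
            · rw [div_le_iff₀ (by positivity)]
              have h1 : (Real.exp (2 * d) - 1) * (1 + ξ ^ 2)
                  ≤ 2 * d * Real.exp (2 * d) * (1 + ξ ^ 2) := by
                nlinarith [exp_sub_one hd]
              have h2 : Real.exp d * ((1 + ξ ^ 2) * d / E)
                    * (2 * (Real.exp d * Real.sqrt (Real.sinh t ^ 2 - ξ ^ 2)))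
                  ≥ 2 * d * Real.exp (2 * d) * (1 + ξ ^ 2) := by
                have he2 : Real.exp (2 * d) = Real.exp d * Real.exp d := by
                  rw [two_mul, Real.exp_add]
                have : Real.exp d * ((1 + ξ ^ 2) * d / E)
                    * (2 * (Real.exp d * Real.sqrt (Real.sinh t ^ 2 - ξ ^ 2)))
                    = 2 * d * (Real.exp d * Real.exp d) * (1 + ξ ^ 2)
                      * (Real.sqrt (Real.sinh t ^ 2 - ξ ^ 2) / E) := by
                  field_simp
                rw [this, he2]
                have hge1 : 1 ≤ Real.sqrt (Real.sinh t ^ 2 - ξ ^ 2) / E :=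
                  (one_le_div hE).2 hEle
                exact le_mul_of_one_le_right (by positivity) hge1
              exact h1.trans h2
    have hct : Real.cosh t ≤ Pf ξ t := cosh_le_Pf ξ t
    have hcs : Real.cosh s ≤ Real.exp d * Real.cosh t := by
      have := cosh_le_exp_mul (t := t) hd
      rwa [show t + d = s by rw [hdd]; ring] at this
    have hep : 0 < Real.exp d := Real.exp_pos d
    have hkey : Real.exp d * ((1 + ξ ^ 2) * d / E)
        ≤ Real.exp d * (Pf ξ t * ((1 + ξ ^ 2) * d / (E * Real.cosh t))) := by
      have h3 : Pf ξ t * ((1 + ξ ^ 2) * d / (E * Real.cosh t))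
          = ((1 + ξ ^ 2) * d / E) * (Pf ξ t / Real.cosh t) := by
        field_simp
      rw [h3]
      have h4 : (1:ℝ) ≤ Pf ξ t / Real.cosh t := (one_le_div (Real.cosh_pos t)).2 hct
      have h5 : 0 ≤ (1 + ξ ^ 2) * d / E := by positivity
      exact mul_le_mul_of_nonneg_left (le_mul_of_one_le_right h5 h4) (Real.exp_pos d).le
    unfold Pf at *
    nlinarith [Real.cosh_pos t]
  calc Gf ξ s ≤ Real.log (Real.exp d * (Pf ξ t * (1 + (1 + ξ ^ 2) * d / (E * Real.cosh t)))) :=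
        Real.log_le_log (Pf_pos ξ s) hP
    _ = d + (Gf ξ t + Real.log (1 + (1 + ξ ^ 2) * d / (E * Real.cosh t))) := by
        have hpos : (0:ℝ) < 1 + (1 + ξ ^ 2) * d / (E * Real.cosh t) := by
          have : (0:ℝ) ≤ (1 + ξ ^ 2) * d / (E * Real.cosh t) := by positivity
          linarith
        rw [Real.log_mul (Real.exp_pos d).ne' (mul_pos (Pf_pos ξ t) hpos).ne', Real.log_exp,
          Real.log_mul (Pf_pos ξ t).ne' hpos.ne']
        rfl
    _ ≤ Gf ξ t + d + (1 + ξ ^ 2) * d / (E * Real.cosh t) := by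
        have hpos : (0:ℝ) < 1 + (1 + ξ ^ 2) * d / (E * Real.cosh t) := by
          have : (0:ℝ) ≤ (1 + ξ ^ 2) * d / (E * Real.cosh t) := by positivity
          linarith
        have := Real.log_le_sub_one_of_pos hpos
        linarith

lemma phi_mono {ξ v v' : ℝ} (hξ : 0 < ξ) (hvv : v' ≤ v) (hv1 : v ≤ 1) (hv0 : 0 ≤ v')
    (hW : 0 ≤ ((1 - v) / 2) ^ 2 - ξ ^ 2 * v) :
    (1 + v) / 2 + Real.sqrt (((1 - v) / 2) ^ 2 - ξ ^ 2 * v)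
      ≤ (1 + v') / 2 + Real.sqrt (((1 - v') / 2) ^ 2 - ξ ^ 2 * v') := by
  have hWW : ((1 - v) / 2) ^ 2 - ξ ^ 2 * v ≤ ((1 - v') / 2) ^ 2 - ξ ^ 2 * v' := by nlinarith
  have hW' : 0 ≤ ((1 - v') / 2) ^ 2 - ξ ^ 2 * v' := hW.trans hWW
  set a := Real.sqrt (((1 - v) / 2) ^ 2 - ξ ^ 2 * v) with ha
  set b := Real.sqrt (((1 - v') / 2) ^ 2 - ξ ^ 2 * v') with hb
  have ha2 : a ^ 2 = ((1 - v) / 2) ^ 2 - ξ ^ 2 * v := Real.sq_sqrt hW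
  have hb2 : b ^ 2 = ((1 - v') / 2) ^ 2 - ξ ^ 2 * v' := Real.sq_sqrt hW'
  have ha0 : 0 ≤ a := Real.sqrt_nonneg _
  have hb0 : 0 ≤ b := Real.sqrt_nonneg _
  have haub : a ≤ (1 - v) / 2 := by
    rw [ha, Real.sqrt_le_left (by linarith : (0:ℝ) ≤ (1 - v) / 2)]
    nlinarith
  have hbub : b ≤ (1 - v') / 2 := by
    rw [hb, Real.sqrt_le_left (by linarith : (0:ℝ) ≤ (1 - v') / 2)]
    nlinarith
  -- goal reduces to (v - v')/2 ≤ b - a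
  have key : (v - v') / 2 ≤ b - a := by
    rcases eq_or_lt_of_le hvv with heq | hlt
    · subst heq
      have : a = b := by rw [ha, hb]
      simp [this]
    · by_contra hcon
      push_neg at hcon
      have hdiff : b ^ 2 - a ^ 2 = (v - v') * ((2 - v - v') / 4 + ξ ^ 2) := by
        rw [ha2, hb2]; ring
      nlinarith [mul_pos (sub_pos.2 hlt) (mul_pos hξ hξ), sq_nonneg (a + b),
        mul_nonneg ha0 hb0]
  linarith

lemma exp_mul_Pf (ξ u : ℝ) :
    Real.exp (-u) * Pf ξ u = (1 + Real.exp (-(2 * u))) / 2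
      + Real.sqrt (((1 - Real.exp (-(2 * u))) / 2) ^ 2 - ξ ^ 2 * Real.exp (-(2 * u))) := by
  have e1 : Real.exp (-(2 * u)) = Real.exp (-u) * Real.exp (-u) := by
    rw [← Real.exp_add]; ring_nf
  have e2 : Real.exp u * Real.exp (-u) = 1 := by
    rw [← Real.exp_add]; simp
  unfold Pf
  have h1 : Real.exp (-u) * Real.cosh u = (1 + Real.exp (-(2 * u))) / 2 := by
    rw [Real.cosh_eq, e1]
    field_simp
    linear_combination e2
  have h2 : Real.exp (-u) * Real.sqrt (Real.sinh u ^ 2 - ξ ^ 2)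
      = Real.sqrt (((1 - Real.exp (-(2 * u))) / 2) ^ 2 - ξ ^ 2 * Real.exp (-(2 * u))) := by
    have h3 : ((1 - Real.exp (-(2 * u))) / 2) ^ 2 - ξ ^ 2 * Real.exp (-(2 * u))
        = Real.exp (2 * (-u)) * (Real.sinh u ^ 2 - ξ ^ 2) := by
      rw [Real.sinh_eq]
      have e3 : Real.exp (2 * (-u)) = Real.exp (-u) * Real.exp (-u) := by
        rw [← Real.exp_add]; ring_nf
      rw [e3, e1]
      ring_nf
      nlinarith [e2, sq_nonneg (Real.exp u), sq_nonneg (Real.exp (-u))]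
    rw [h3, sqrt_exp_mul]
  rw [mul_add, h1, h2]

lemma G_lower {ξ t s : ℝ} (hξ : 0 < ξ) (ht : 0 ≤ t) (hts : t ≤ s)
    (h : ξ ^ 2 ≤ Real.sinh t ^ 2) :
    s - t ≤ Gf ξ s - Gf ξ t := by
  have key : Real.exp (-t) * Pf ξ t ≤ Real.exp (-s) * Pf ξ s := by
    rw [exp_mul_Pf, exp_mul_Pf]
    apply phi_mono hξ
    · exact Real.exp_le_exp.2 (by linarith)
    · calc Real.exp (-(2 * t)) ≤ Real.exp 0 := Real.exp_le_exp.2 (by linarith)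
        _ = 1 := Real.exp_zero
    · exact (Real.exp_pos _).le
    · have h3 : ((1 - Real.exp (-(2 * t))) / 2) ^ 2 - ξ ^ 2 * Real.exp (-(2 * t))
          = Real.exp (2 * (-t)) * (Real.sinh t ^ 2 - ξ ^ 2) := by
        rw [Real.sinh_eq]
        have e1 : Real.exp (-(2 * t)) = Real.exp (-t) * Real.exp (-t) := by
          rw [← Real.exp_add]; ring_nf
        have e2 : Real.exp t * Real.exp (-t) = 1 := by
          rw [← Real.exp_add]; simp
        have e3 : Real.exp (2 * (-t)) = Real.exp (-t) * Real.exp (-t) := by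
          rw [← Real.exp_add]; ring_nf
        rw [e3, e1]
        ring_nf
        nlinarith [e2, sq_nonneg (Real.exp t), sq_nonneg (Real.exp (-t))]
      rw [h3]
      exact mul_nonneg (Real.exp_pos _).le (by linarith)
  have l1 : Real.log (Real.exp (-t) * Pf ξ t) = -t + Gf ξ t := by
    rw [Real.log_mul (Real.exp_pos _).ne' (Pf_pos ξ t).ne', Real.log_exp]; rfl
  have l2 : Real.log (Real.exp (-s) * Pf ξ s) = -s + Gf ξ s := by
    rw [Real.log_mul (Real.exp_pos _).ne' (Pf_pos ξ s).ne', Real.log_exp]; rfl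
  have := Real.log_le_log (mul_pos (Real.exp_pos _) (Pf_pos ξ t)) key
  rw [l1, l2] at this
  linarith

lemma cosh_half (u : ℝ) : Real.cosh u = 1 + 2 * Real.sinh (u / 2) ^ 2 := by
  have h := Real.cosh_add (u / 2) (u / 2)
  rw [show u / 2 + u / 2 = u by ring] at h
  have h2 := Real.cosh_sq (u / 2)
  nlinarith

lemma sinh_half (u : ℝ) : Real.sinh u = 2 * Real.sinh (u / 2) * Real.cosh (u / 2) := by
  have h := Real.sinh_add (u / 2) (u / 2)
  rw [show u / 2 + u / 2 = u by ring] at h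
  rw [h]; ring

lemma Ga {ξ u : ℝ} (hu : 0 ≤ u) (h : 2 * Real.sinh (u / 2) ≤ ξ) :
    Gf ξ u ≤ Real.log (1 + ξ ^ 2) := by
  have hσ : 0 ≤ Real.sinh (u / 2) := by
    simpa using Real.sinh_le_sinh.2 (by linarith : (0:ℝ) ≤ u / 2)
  have hc : Real.cosh u = 1 + 2 * Real.sinh (u / 2) ^ 2 := cosh_half u
  have hs : Real.sinh u = 2 * Real.sinh (u / 2) * Real.cosh (u / 2) := sinh_half u
  have hcs : Real.cosh (u / 2) ^ 2 = Real.sinh (u / 2) ^ 2 + 1 := Real.cosh_sq _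
  apply Real.log_le_log (Pf_pos ξ u)
  unfold Pf
  have h1 : Real.sqrt (Real.sinh u ^ 2 - ξ ^ 2) ≤ ξ ^ 2 / 2 := by
    rw [Real.sqrt_le_left (by positivity)]
    rw [hs]
    have h4 : 4 * Real.sinh (u / 2) ^ 2 ≤ ξ ^ 2 := by nlinarith
    nlinarith [h4, mul_nonneg (sub_nonneg.2 h4)
      (by positivity : (0:ℝ) ≤ ξ ^ 2 + 4 * Real.sinh (u / 2) ^ 2)]
  nlinarith

lemma Gb {ξ u : ℝ} (hu : 0 ≤ u) (hξ : 0 ≤ ξ) (h : ξ ≤ 2 * Real.sinh (u / 2)) :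
    Real.log (1 + ξ ^ 2) ≤ Gf ξ u := by
  have hσ : 0 ≤ Real.sinh (u / 2) := by
    simpa using Real.sinh_le_sinh.2 (by linarith : (0:ℝ) ≤ u / 2)
  have hc : Real.cosh u = 1 + 2 * Real.sinh (u / 2) ^ 2 := cosh_half u
  have hs : Real.sinh u = 2 * Real.sinh (u / 2) * Real.cosh (u / 2) := sinh_half u
  have hcs : Real.cosh (u / 2) ^ 2 = Real.sinh (u / 2) ^ 2 + 1 := Real.cosh_sq _
  apply Real.log_le_log (by positivity)
  unfold Pf
  have h1 : 2 * Real.sinh (u / 2) ^ 2 ≤ Real.sqrt (Real.sinh u ^ 2 - ξ ^ 2) := by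
    rw [show (2 * Real.sinh (u / 2) ^ 2 : ℝ)
        = Real.sqrt ((2 * Real.sinh (u / 2) ^ 2) ^ 2) from (Real.sqrt_sq (by positivity)).symm]
    apply Real.sqrt_le_sqrt
    rw [hs]
    nlinarith
  nlinarith

lemma Gl1 {ξ : ℝ} (hξ : 0 ≤ ξ) : Gf ξ (Real.arsinh ξ) = Real.log (1 + ξ ^ 2) / 2 := by
  unfold Gf Pf
  rw [Real.sinh_arsinh, Real.cosh_arsinh]
  simp only [sub_self, Real.sqrt_zero, add_zero]
  exact Real.log_sqrt (by positivity)

lemma Ff_eq_G {ξ u : ℝ} (hu : 0 < u) (hξ : 0 < ξ) (h : ξ ≤ 2 * Real.sinh (u / 2)) :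
    Ff ξ u = Gf ξ u := by
  have hσ : 0 < Real.sinh (u / 2) := by linarith
  have hc : 1 < Real.cosh (u / 2) := Real.one_lt_cosh.2 (by positivity)
  have hsinh : ξ < Real.sinh u := by
    rw [sinh_half]
    nlinarith
  unfold Ff
  rw [if_neg (not_le.2 hsinh)]
  rcases le_or_gt (2 * Real.sinh (u / 2)) ξ with h2 | h2
  · rw [if_pos h2]
    have hG : Gf ξ u = Real.log (1 + ξ ^ 2) := le_antisymm (Ga hu.le h2) (Gb hu.le hξ.le h)
    rw [hG]; ring
  · rw [if_neg (not_le.2 h2)]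

lemma F_bounds {ξ t s : ℝ} (hξ : 0 < ξ) (ht : 0 < t) (hts : t ≤ s) (hs : ξ < Real.sinh s) :
    0 ≤ Ff ξ s - Ff ξ t ∧
      Ff ξ s - Ff ξ t ≤ 2 * (Gf ξ s - Gf ξ (max t (Real.arsinh ξ))) := by
  have hs1 : ¬ (Real.sinh s ≤ ξ) := not_le.2 hs
  have hlog0 : 0 ≤ Real.log (1 + ξ ^ 2) := Real.log_nonneg (by nlinarith)
  have hs0 : 0 < s := lt_of_lt_of_le ht hts
  rcases le_or_gt (Real.sinh t) ξ with h1 | h1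
  · have htm : t ≤ Real.arsinh ξ := by
      rw [← Real.sinh_le_sinh, Real.sinh_arsinh]; exact h1
    have hm : max t (Real.arsinh ξ) = Real.arsinh ξ := max_eq_right htm
    have hFt : Ff ξ t = 0 := if_pos h1
    have hGm : Gf ξ (max t (Real.arsinh ξ)) = Real.log (1 + ξ ^ 2) / 2 := by
      rw [hm, Gl1 hξ.le]
    have hmums : Real.arsinh ξ ≤ s := by
      rw [← Real.sinh_le_sinh, Real.sinh_arsinh]; exact hs.le
    have hmu0 : 0 ≤ Real.arsinh ξ := by
      rw [← Real.sinh_le_sinh, Real.sinh_arsinh]; simpa using hξ.le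
    have hGms : Gf ξ (Real.arsinh ξ) ≤ Gf ξ s := Gf_mono hmu0 hmums
    rw [Gl1 hξ.le] at hGms
    rcases le_or_gt (2 * Real.sinh (s / 2)) ξ with h2 | h2
    · have hFs : Ff ξ s = 2 * Gf ξ s - Real.log (1 + ξ ^ 2) := by
        unfold Ff; rw [if_neg hs1, if_pos h2]
      rw [hFs, hFt, hGm]
      constructor <;> linarith
    · have hFs : Ff ξ s = Gf ξ s := by
        unfold Ff; rw [if_neg hs1, if_neg (not_le.2 h2)]
      have hGb := Gb hs0.le hξ.le h2.le
      rw [hFs, hFt, hGm]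
      constructor <;> linarith
  · have htm : Real.arsinh ξ ≤ t := by
      rw [← Real.sinh_le_sinh, Real.sinh_arsinh]; exact h1.le
    have hm : max t (Real.arsinh ξ) = t := max_eq_left htm
    have ht1 : ¬ (Real.sinh t ≤ ξ) := not_le.2 h1
    have hGts : Gf ξ t ≤ Gf ξ s := Gf_mono ht.le hts
    rw [hm]
    rcases le_or_gt (2 * Real.sinh (t / 2)) ξ with h2 | h2
    · have hFt : Ff ξ t = 2 * Gf ξ t - Real.log (1 + ξ ^ 2) := by
        unfold Ff; rw [if_neg ht1, if_pos h2]
      have hGa := Ga ht.le h2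
      rcases le_or_gt (2 * Real.sinh (s / 2)) ξ with h3 | h3
      · have hFs : Ff ξ s = 2 * Gf ξ s - Real.log (1 + ξ ^ 2) := by
          unfold Ff; rw [if_neg hs1, if_pos h3]
        rw [hFs, hFt]
        constructor <;> linarith
      · have hFs : Ff ξ s = Gf ξ s := by
          unfold Ff; rw [if_neg hs1, if_neg (not_le.2 h3)]
        have hGb := Gb hs0.le hξ.le h3.le
        rw [hFs, hFt]
        constructor <;> linarith
    · have hFt : Ff ξ t = Gf ξ t := by
        unfold Ff; rw [if_neg ht1, if_neg (not_le.2 h2)]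
      have h3 : ξ < 2 * Real.sinh (s / 2) := by
        have : Real.sinh (t / 2) ≤ Real.sinh (s / 2) := Real.sinh_le_sinh.2 (by linarith)
        linarith
      have hFs : Ff ξ s = Gf ξ s := by
        unfold Ff; rw [if_neg hs1, if_neg (not_le.2 h3)]
      rw [hFs, hFt]
      constructor <;> linarith

lemma fxi_sub (ξ t s : ℝ) :
    fxi ξ s - fxi ξ t = 2 / ξ ^ 2 * ((s - t) - (Ff ξ s - Ff ξ t)) := by
  rw [fxi_eq_s19, fxi_eq_s19]; ring

lemma A1 {ξ t s : ℝ} (hξ : 0 < ξ) (hts : t ≤ s) (hcase : Real.sinh s ≤ ξ) :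
    |fxi ξ s - fxi ξ t| ≤ 2 / ξ ^ 2 * (s - t) := by
  have hFt : Ff ξ t = 0 := by
    unfold Ff; rw [if_pos ((Real.sinh_le_sinh.2 hts).trans hcase)]
  have hFs : Ff ξ s = 0 := by unfold Ff; rw [if_pos hcase]
  rw [fxi_sub, hFs, hFt]
  rw [abs_of_nonneg (mul_nonneg (by positivity) (by linarith))]
  apply le_of_eq; ring

lemma abs_helper {ξ d B : ℝ} (hξ : 0 < ξ) (hd : 0 ≤ d) (hB : 0 ≤ B) (hdB : d ≤ B)
    {F : ℝ} (hF0 : 0 ≤ F) (hFB : F ≤ 2 * B) :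
    |2 / ξ ^ 2 * (d - F)| ≤ 2 / ξ ^ 2 * (3 * B) := by
  rw [abs_mul, abs_of_nonneg (by positivity : (0:ℝ) ≤ 2 / ξ ^ 2)]
  apply mul_le_mul_of_nonneg_left _ (by positivity : (0:ℝ) ≤ 2 / ξ ^ 2)
  rw [abs_le]
  constructor <;> linarith

lemma A2 {ξ t s : ℝ} (hξ : 0 < ξ) (ht : 0 < t) (hts : t ≤ s) :
    |fxi ξ s - fxi ξ t| ≤ 2 / ξ ^ 2 * (3 * ((s - t) + Real.sqrt (2 * (s - t)))) := by
  have hd : 0 ≤ s - t := by linarith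
  by_cases hcase : Real.sinh s ≤ ξ
  · calc |fxi ξ s - fxi ξ t| ≤ 2 / ξ ^ 2 * (s - t) := A1 hξ hts hcase
      _ ≤ _ := by
        have := Real.sqrt_nonneg (2 * (s - t))
        apply mul_le_mul_of_nonneg_left _ (by positivity : (0:ℝ) ≤ 2 / ξ ^ 2)
        linarith
  · push_neg at hcase
    obtain ⟨hlow, hup⟩ := F_bounds hξ ht hts hcase
    set m := max t (Real.arsinh ξ) with hmdef
    have htm : t ≤ m := le_max_left _ _
    have hm0 : 0 ≤ m := le_trans ht.le htm
    have hmξ : ξ ≤ Real.sinh m := by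
      have h1 : Real.sinh (Real.arsinh ξ) ≤ Real.sinh m :=
        Real.sinh_le_sinh.2 (le_max_right _ _)
      rwa [Real.sinh_arsinh] at h1
    have hms : m ≤ s := by
      apply max_le hts
      rw [← Real.sinh_le_sinh, Real.sinh_arsinh]; exact hcase.le
    have hH := G_holder hξ.le hmξ hm0 hms
    have hsq : Real.sqrt (2 * (s - m)) ≤ Real.sqrt (2 * (s - t)) :=
      Real.sqrt_le_sqrt (by linarith)
    have hFB : Ff ξ s - Ff ξ t ≤ 2 * ((s - t) + Real.sqrt (2 * (s - t))) := by
      have : Gf ξ s - Gf ξ m ≤ (s - t) + Real.sqrt (2 * (s - t)) := by linarith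
      linarith
    rw [fxi_sub]
    exact abs_helper hξ hd (by positivity) (by
      have := Real.sqrt_nonneg (2 * (s - t)); linarith) hlow hFB

lemma A3 {ξ t s : ℝ} (hξ : 0 < ξ) (ht : 0 < t) (hts : t ≤ s)
    (hst : (1 + ξ ^ 2) / 4 ≤ Real.sinh t ^ 2 - ξ ^ 2) :
    |fxi ξ s - fxi ξ t| ≤ 2 / ξ ^ 2 * (9 * (s - t)) := by
  have hd : 0 ≤ s - t := by linarith
  have hsinht : 0 ≤ Real.sinh t := by simpa using Real.sinh_le_sinh.2 ht.le
  have hξt : ξ < Real.sinh t := by nlinarith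
  have hcase : ξ < Real.sinh s := lt_of_lt_of_le hξt (Real.sinh_le_sinh.2 hts)
  obtain ⟨hlow, hup⟩ := F_bounds hξ ht hts hcase
  set m := max t (Real.arsinh ξ) with hmdef
  have htm : t ≤ m := le_max_left _ _
  have hm0 : 0 ≤ m := le_trans ht.le htm
  have hms : m ≤ s := by
    apply max_le hts
    rw [← Real.sinh_le_sinh, Real.sinh_arsinh]; exact hcase.le
  have hsinhm : Real.sinh t ≤ Real.sinh m := Real.sinh_le_sinh.2 htm
  have hm2 : (1 + ξ ^ 2) / 4 ≤ Real.sinh m ^ 2 - ξ ^ 2 := by nlinarith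
  have hE : (0:ℝ) < Real.sqrt (1 + ξ ^ 2) / 2 := by positivity
  have hE2 : (Real.sqrt (1 + ξ ^ 2) / 2) ^ 2 ≤ Real.sinh m ^ 2 - ξ ^ 2 := by
    have : Real.sqrt (1 + ξ ^ 2) ^ 2 = 1 + ξ ^ 2 := Real.sq_sqrt (by positivity)
    nlinarith
  have hC := G_core hm0 hms hE hE2
  have hmξ : ξ ≤ Real.sinh m := le_trans hξt.le hsinhm
  have hcoshm : Real.sqrt (1 + ξ ^ 2) ≤ Real.cosh m := sqrt_one_add_sq_le_cosh ξ m hmξ hξ.le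
  have hsq1 : (0:ℝ) < Real.sqrt (1 + ξ ^ 2) := by positivity
  have hterm : (1 + ξ ^ 2) * (s - m) / (Real.sqrt (1 + ξ ^ 2) / 2 * Real.cosh m)
      ≤ 2 * (s - m) := by
    rw [div_le_iff₀ (by positivity)]
    have h1 : Real.sqrt (1 + ξ ^ 2) ^ 2 = 1 + ξ ^ 2 := Real.sq_sqrt (by positivity)
    nlinarith [mul_nonneg hd (mul_pos hsq1 (Real.cosh_pos m)).le,
      mul_nonneg (by linarith : (0:ℝ) ≤ s - m)
        (mul_nonneg hsq1.le (sub_nonneg.2 hcoshm))]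
  have hFB : Ff ξ s - Ff ξ t ≤ 2 * (3 * (s - t)) := by
    have h2 : Gf ξ s - Gf ξ m ≤ 3 * (s - m) := by linarith
    have h3 : s - m ≤ s - t := by linarith
    linarith
  rw [fxi_sub]
  have := abs_helper hξ hd (by linarith : (0:ℝ) ≤ 3 * (s - t)) (by linarith) hlow hFB
  calc |2 / ξ ^ 2 * ((s - t) - (Ff ξ s - Ff ξ t))| ≤ 2 / ξ ^ 2 * (3 * (3 * (s - t))) := this
    _ = 2 / ξ ^ 2 * (9 * (s - t)) := by ring

lemma A4 {ξ t s : ℝ} (hξ : 1 ≤ ξ) (ht : 0 < t) (hts : t ≤ s)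
    (h : ξ ^ 2 + ξ ^ 4 / 4 ≤ Real.sinh t ^ 2) :
    |fxi ξ s - fxi ξ t| ≤ 10 * (s - t) / Real.sinh t ^ 2 := by
  have hξ0 : 0 < ξ := lt_of_lt_of_le one_pos hξ
  have hd : 0 ≤ s - t := by linarith
  have hsinht : 0 < Real.sinh t := by
    have := Real.sinh_le_sinh.2 ht.le
    simp only [Real.sinh_zero] at this
    nlinarith
  -- ξ ≤ 2 sinh(t/2)
  have hcosht : 1 + ξ ^ 2 / 2 ≤ Real.cosh t := by
    have h1 : Real.cosh t ^ 2 = Real.sinh t ^ 2 + 1 := Real.cosh_sq t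
    nlinarith [Real.cosh_pos t]
  have hσt : ξ ≤ 2 * Real.sinh (t / 2) := by
    have h1 : Real.cosh t = 1 + 2 * Real.sinh (t / 2) ^ 2 := cosh_half t
    have hσ0 : 0 ≤ Real.sinh (t / 2) := by
      simpa using Real.sinh_le_sinh.2 (by linarith : (0:ℝ) ≤ t / 2)
    nlinarith
  have hσs : ξ ≤ 2 * Real.sinh (s / 2) := by
    have : Real.sinh (t / 2) ≤ Real.sinh (s / 2) := Real.sinh_le_sinh.2 (by linarith)
    linarith
  have hFt : Ff ξ t = Gf ξ t := Ff_eq_G ht hξ0 hσt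
  have hFs : Ff ξ s = Gf ξ s := Ff_eq_G (lt_of_lt_of_le ht hts) hξ0 hσs
  -- lower bound on ΔG
  have hlow := G_lower hξ0 ht.le hts (by nlinarith)
  -- upper bound via G_core with E = sinh t / √5
  have hE : (0:ℝ) < Real.sinh t / Real.sqrt 5 := by positivity
  have hsq5 : Real.sqrt 5 ^ 2 = 5 := Real.sq_sqrt (by norm_num)
  have hsq5pos : (0:ℝ) < Real.sqrt 5 := by positivity
  have hE2 : (Real.sinh t / Real.sqrt 5) ^ 2 ≤ Real.sinh t ^ 2 - ξ ^ 2 := by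
    have h1 : (Real.sinh t / Real.sqrt 5) ^ 2 = Real.sinh t ^ 2 / 5 := by
      rw [div_pow, hsq5]
    rw [h1]
    nlinarith [sq_nonneg ξ, sq_nonneg (ξ ^ 2 - 1)]
  have hC := G_core ht.le hts hE hE2
  have hcosh2 : Real.sinh t ≤ Real.cosh t := (Real.sinh_lt_cosh t).le
  have hterm : (1 + ξ ^ 2) * (s - t) / (Real.sinh t / Real.sqrt 5 * Real.cosh t)
      ≤ 5 * ξ ^ 2 * (s - t) / Real.sinh t ^ 2 := by
    rw [div_le_div_iff₀ (by positivity) (by positivity)]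
    have h5 : Real.sqrt 5 ≤ 5 / 2 := by
      rw [show (5:ℝ)/2 = Real.sqrt ((5/2)^2) from (Real.sqrt_sq (by norm_num)).symm]
      apply Real.sqrt_le_sqrt; norm_num
    have h6 : 1 + ξ ^ 2 ≤ 2 * ξ ^ 2 := by nlinarith
    -- goal: (1+ξ²)(s−t) * sinh t ^2 ≤ 5ξ²(s−t) * (sinh t/√5 * cosh t)
    have key : (1 + ξ ^ 2) * (s - t) * Real.sinh t ^ 2 * Real.sqrt 5
        ≤ 5 * ξ ^ 2 * (s - t) * (Real.sinh t / Real.sqrt 5 * Real.cosh t) * Real.sqrt 5 := by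
      have h8 : 2 * ξ ^ 2 * (s - t) * Real.sinh t ^ 2 * Real.sqrt 5
          ≤ 5 * ξ ^ 2 * (s - t) * (Real.sinh t * Real.cosh t) := by
        have h9 : 2 * Real.sqrt 5 ≤ 5 := by nlinarith
        nlinarith [mul_nonneg (mul_nonneg (by positivity : (0:ℝ) ≤ ξ ^ 2) hd)
            (mul_pos hsinht (Real.cosh_pos t)).le,
          mul_nonneg (mul_nonneg (by positivity : (0:ℝ) ≤ ξ ^ 2) hd)
            (mul_nonneg hsinht.le (sub_nonneg.2 hcosh2))]
      have heq : 5 * ξ ^ 2 * (s - t) * (Real.sinh t / Real.sqrt 5 * Real.cosh t) * Real.sqrt 5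
          = 5 * ξ ^ 2 * (s - t) * (Real.sinh t * Real.cosh t) := by
        field_simp
      rw [heq]
      calc (1 + ξ ^ 2) * (s - t) * Real.sinh t ^ 2 * Real.sqrt 5
          ≤ 2 * ξ ^ 2 * (s - t) * Real.sinh t ^ 2 * Real.sqrt 5 := by
            nlinarith [mul_nonneg (mul_nonneg hd (sq_nonneg (Real.sinh t))) hsq5pos.le]
        _ ≤ 5 * ξ ^ 2 * (s - t) * (Real.sinh t * Real.cosh t) := h8
    exact le_of_mul_le_mul_right key hsq5pos
  have hup : Gf ξ s - Gf ξ t ≤ (s - t) + 5 * ξ ^ 2 * (s - t) / Real.sinh t ^ 2 := by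
    linarith [hC, hterm]
  rw [fxi_sub, hFs, hFt]
  have hX : (0:ℝ) ≤ 5 * ξ ^ 2 * (s - t) / Real.sinh t ^ 2 := by positivity
  have habs : |2 / ξ ^ 2 * ((s - t) - (Gf ξ s - Gf ξ t))|
      ≤ 2 / ξ ^ 2 * (5 * ξ ^ 2 * (s - t) / Real.sinh t ^ 2) := by
    rw [abs_mul, abs_of_nonneg (by positivity : (0:ℝ) ≤ 2 / ξ ^ 2)]
    apply mul_le_mul_of_nonneg_left _ (by positivity : (0:ℝ) ≤ 2 / ξ ^ 2)
    rw [abs_le]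
    constructor <;> linarith
  calc |2 / ξ ^ 2 * ((s - t) - (Gf ξ s - Gf ξ t))|
      ≤ 2 / ξ ^ 2 * (5 * ξ ^ 2 * (s - t) / Real.sinh t ^ 2) := habs
    _ = 10 * (s - t) / Real.sinh t ^ 2 := by
        field_simp
        ring

lemma numeric_cosh_sinh : Real.cosh 1 + 2 * Real.sinh 1 ≤ 4 := by
  rw [Real.cosh_eq, Real.sinh_eq]
  have he := Real.exp_one_lt_d9
  have he2 := Real.exp_one_gt_d9
  have hinv : Real.exp (-1) * Real.exp 1 = 1 := by
    rw [← Real.exp_add]; norm_num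
  nlinarith [Real.exp_pos 1, Real.exp_pos (-1)]

/-- Lemma 2.9: variation of `f_ξ` under a perturbation `|ℓ − ℓ′| < δ`,
with `ℓ₁ = arcsinh ξ` and `ℓ₂ = 2 arcsinh(ξ/2)`. -/
theorem fxi_variation :
    ∃ C > (0:ℝ), ∀ δ ξ l l' : ℝ, 0 < δ → δ ≤ 1 → 1 < ξ →
      0 < l → 0 < l' → |l - l'| < δ →
      ((l < Real.arsinh ξ - δ →
          |fxi ξ l - fxi ξ l'| ≤ C * δ / ξ ^ 2) ∧
       (Real.arsinh ξ - δ ≤ l → l ≤ Real.arsinh ξ + 1 →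
          |fxi ξ l - fxi ξ l'| ≤ C * Real.sqrt δ / ξ ^ 2) ∧
       (Real.arsinh ξ + 1 ≤ l → l ≤ 2 * Real.arsinh (ξ / 2) + 1 →
          |fxi ξ l - fxi ξ l'| ≤ C * δ / ξ ^ 2) ∧
       (2 * Real.arsinh (ξ / 2) + 1 ≤ l →
          |fxi ξ l - fxi ξ l'| ≤ C * δ / Real.sinh l ^ 2)) := by
  refine ⟨160, by norm_num, ?_⟩
  intro δ ξ l l' hδ0 hδ1 hξ hl hl' hll
  have hξ0 : (0:ℝ) < ξ := by linarith
  have hξ2 : (0:ℝ) < ξ ^ 2 := by positivity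
  obtain ⟨t, s, ht0, hts, hdlt, hls, hsl, habs⟩ :
      ∃ t s : ℝ, 0 < t ∧ t ≤ s ∧ s - t < δ ∧ l ≤ s ∧ s ≤ l + (s - t) ∧
        |fxi ξ l - fxi ξ l'| = |fxi ξ s - fxi ξ t| := by
    rcases le_total l l' with h | h
    · refine ⟨l, l', hl, h, ?_, h, by linarith, abs_sub_comm _ _⟩
      rw [abs_sub_lt_iff] at hll; linarith [hll.2]
    · refine ⟨l', l, hl', h, ?_, le_refl l, by linarith, rfl⟩
      rw [abs_sub_lt_iff] at hll; linarith [hll.1]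
  have hd0 : 0 ≤ s - t := by linarith
  rw [habs]
  refine ⟨?_, ?_, ?_, ?_⟩
  · -- Case 1
    intro h1
    have hsa : s < Real.arsinh ξ := by linarith
    have hsinh : Real.sinh s ≤ ξ := by
      have := Real.sinh_le_sinh.2 hsa.le
      rwa [Real.sinh_arsinh] at this
    calc |fxi ξ s - fxi ξ t| ≤ 2 / ξ ^ 2 * (s - t) := A1 hξ0 hts hsinh
      _ = 2 * (s - t) / ξ ^ 2 := by ring
      _ ≤ 160 * δ / ξ ^ 2 := by gcongr <;> linarith
  · -- Case 2
    intro _ _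
    have hA2 := A2 hξ0 ht0 hts
    have hδs : δ ≤ Real.sqrt δ := by
      nlinarith [Real.sq_sqrt hδ0.le, Real.sqrt_nonneg δ, sq_nonneg (Real.sqrt δ - 1)]
    have hsq : Real.sqrt (2 * (s - t)) ≤ 2 * Real.sqrt δ := by
      calc Real.sqrt (2 * (s - t)) ≤ Real.sqrt (2 * δ) := Real.sqrt_le_sqrt (by linarith)
        _ ≤ Real.sqrt (4 * δ) := Real.sqrt_le_sqrt (by linarith)
        _ = 2 * Real.sqrt δ := by
            rw [show (4:ℝ) * δ = 2 ^ 2 * δ by ring, Real.sqrt_mul (by positivity),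
              Real.sqrt_sq (by norm_num)]
    have hsδ0 : 0 ≤ Real.sqrt δ := Real.sqrt_nonneg δ
    calc |fxi ξ s - fxi ξ t|
        ≤ 2 / ξ ^ 2 * (3 * ((s - t) + Real.sqrt (2 * (s - t)))) := hA2
      _ = 6 * ((s - t) + Real.sqrt (2 * (s - t))) / ξ ^ 2 := by ring
      _ ≤ 160 * Real.sqrt δ / ξ ^ 2 := by gcongr ?_ / _; nlinarith
  · -- Case 3
    intro h3a _
    rcases le_or_gt (1 / 2 : ℝ) δ with hhalf | hhalf
    · have hA2 := A2 hξ0 ht0 hts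
      have hsq : Real.sqrt (2 * (s - t)) ≤ 2 * δ := by
        calc Real.sqrt (2 * (s - t)) ≤ Real.sqrt (2 * δ) := Real.sqrt_le_sqrt (by linarith)
          _ ≤ 2 * δ := by
              rw [Real.sqrt_le_left (by linarith)]
              nlinarith
      calc |fxi ξ s - fxi ξ t|
          ≤ 2 / ξ ^ 2 * (3 * ((s - t) + Real.sqrt (2 * (s - t)))) := hA2
        _ = 6 * ((s - t) + Real.sqrt (2 * (s - t))) / ξ ^ 2 := by ring
        _ ≤ 160 * δ / ξ ^ 2 := by gcongr ?_ / _; nlinarith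
    · -- δ < 1/2
      have h5 : Real.arsinh ξ + 1 / 2 ≤ t := by linarith
      have h6 : Real.sinh (Real.arsinh ξ + 1 / 2) ≤ Real.sinh t := Real.sinh_le_sinh.2 h5
      rw [Real.sinh_add, Real.sinh_arsinh, Real.cosh_arsinh] at h6
      have hs12 : (1 / 2 : ℝ) ≤ Real.sinh (1 / 2) := Real.self_le_sinh_iff.2 (by norm_num)
      have hc12 : (1:ℝ) ≤ Real.cosh (1 / 2) := Real.one_le_cosh _
      have hsx : Real.sqrt (1 + ξ ^ 2) ^ 2 = 1 + ξ ^ 2 := Real.sq_sqrt (by positivity)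
      have hsx0 : 0 ≤ Real.sqrt (1 + ξ ^ 2) := Real.sqrt_nonneg _
      have h7 : ξ + Real.sqrt (1 + ξ ^ 2) / 2 ≤ Real.sinh t := by
        nlinarith [mul_nonneg hξ0.le (by linarith : (0:ℝ) ≤ Real.cosh (1 / 2) - 1),
          mul_nonneg hsx0 (by linarith : (0:ℝ) ≤ Real.sinh (1 / 2) - 1 / 2)]
      have h8 : (0:ℝ) ≤ Real.sinh t + (ξ + Real.sqrt (1 + ξ ^ 2) / 2) := by linarith
      have hst : (1 + ξ ^ 2) / 4 ≤ Real.sinh t ^ 2 - ξ ^ 2 := by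
        nlinarith [mul_nonneg (sub_nonneg.2 h7) h8, mul_nonneg hξ0.le hsx0]
      have hA3 := A3 hξ0 ht0 hts hst
      calc |fxi ξ s - fxi ξ t| ≤ 2 / ξ ^ 2 * (9 * (s - t)) := hA3
        _ = 18 * (s - t) / ξ ^ 2 := by ring
        _ ≤ 160 * δ / ξ ^ 2 := by gcongr <;> linarith
  · -- Case 4
    intro h4
    have ht2 : 2 * Real.arsinh (ξ / 2) ≤ t := by linarith
    have hσ : ξ / 2 ≤ Real.sinh (t / 2) := by
      have := Real.sinh_le_sinh.2 (show Real.arsinh (ξ / 2) ≤ t / 2 by linarith)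
      rwa [Real.sinh_arsinh] at this
    have hσ0 : (0:ℝ) ≤ ξ / 2 := by linarith
    have hcs : Real.cosh (t / 2) ^ 2 = Real.sinh (t / 2) ^ 2 + 1 := Real.cosh_sq _
    have hsh : Real.sinh t = 2 * Real.sinh (t / 2) * Real.cosh (t / 2) := sinh_half t
    have hsinh2 : ξ ^ 2 + ξ ^ 4 / 4 ≤ Real.sinh t ^ 2 := by
      rw [hsh]
      have hσ2 : ξ ^ 2 / 4 ≤ Real.sinh (t / 2) ^ 2 := by nlinarith
      nlinarith [hcs, hσ2, mul_nonneg (sub_nonneg.2 hσ2)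
        (by positivity : (0:ℝ) ≤ Real.sinh (t / 2) ^ 2 + ξ ^ 2 / 4)]
    have hA4 := A4 hξ.le ht0 hts hsinh2
    have hsinht : 0 < Real.sinh t := by
      have := Real.sinh_le_sinh.2 ht0.le
      simp only [Real.sinh_zero] at this
      nlinarith
    have hsinht1 : 1 ≤ Real.sinh t := by
      by_contra hc
      push_neg at hc
      nlinarith [mul_pos (show (0:ℝ) < 1 - Real.sinh t by linarith)
        (show (0:ℝ) < 1 + Real.sinh t by linarith)]
    have hcosht : Real.cosh t ≤ 2 * Real.sinh t := by
      have hid : Real.cosh t - Real.sinh t = Real.exp (-t) := by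
        rw [Real.cosh_eq, Real.sinh_eq]; ring
      have : Real.exp (-t) ≤ 1 := by
        rw [show (1:ℝ) = Real.exp 0 from Real.exp_zero.symm]
        exact Real.exp_le_exp.2 (by linarith)
      linarith
    have hsl4 : Real.sinh l ≤ 4 * Real.sinh t := by
      have hlt1 : l ≤ t + 1 := by linarith
      have h7 : Real.sinh l ≤ Real.sinh (t + 1) := Real.sinh_le_sinh.2 hlt1
      rw [Real.sinh_add] at h7
      have hs1 : 0 ≤ Real.sinh 1 := by
        simpa using Real.sinh_le_sinh.2 (by norm_num : (0:ℝ) ≤ 1)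
      have hch1 : (1:ℝ) ≤ Real.cosh 1 := Real.one_le_cosh _
      nlinarith [numeric_cosh_sinh]
    have hsinhl : 0 < Real.sinh l := by
      have := Real.sinh_le_sinh.2 hl.le
      simp only [Real.sinh_zero] at this
      rcases lt_or_eq_of_le this with h | h
      · exact h
      · exfalso
        have : Real.sinh 0 < Real.sinh l := Real.sinh_lt_sinh.2 hl
        simp only [Real.sinh_zero] at this
        linarith [h]
    have hsq : Real.sinh l ^ 2 ≤ 16 * Real.sinh t ^ 2 := by nlinarith
    calc |fxi ξ s - fxi ξ t| ≤ 10 * (s - t) / Real.sinh t ^ 2 := hA4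
      _ ≤ 160 * δ / Real.sinh l ^ 2 := by
          rw [div_le_div_iff₀ (by positivity) (by positivity)]
          nlinarith [mul_nonneg hd0 (sq_nonneg (Real.sinh t)),
            mul_nonneg hδ0.le (sq_nonneg (Real.sinh t))]
end
end
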